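/- arXiv:cs/0608081 — 16 statements merged into one kernel-verified Lean document; each statement's English description precedes it below -/
import Mathlib

section
/- Let n ≥ 1 and let s : Fin n → ℕ satisfy ∑_i s i = 2·S. Put S' = 3^n·S + (3^n − 1)/2 and define t : (Fin n × Bool) → ℕ by t (i, true) = 3^(i:ℕ) + 3^n · (s i) + S' and t (i, false) = 3^(i:ℕ) + S'. Then there exists a finite subset A ⊆ Fin n with ∑_{i ∈ A} s i = S if and only if there exists a finite subset B ⊆ Fin n × Bool with ∑_{x ∈ B} t x = (n + 1) · S'. -/
/-- Correctness of the reduction from Partition to Partition′. -/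
theorem partition_to_partition' (n S : ℕ) (hn : 1 ≤ n) (s : Fin n → ℕ)
    (hs : ∑ i, s i = 2 * S) :
    (∃ A : Finset (Fin n), ∑ i ∈ A, s i = S) ↔
      (∃ B : Finset (Fin n × Bool),
        ∑ x ∈ B,
            (if x.2 then 3 ^ (x.1 : ℕ) + 3 ^ n * s x.1 + (3 ^ n * S + (3 ^ n - 1) / 2)
             else 3 ^ (x.1 : ℕ) + (3 ^ n * S + (3 ^ n - 1) / 2)) =
          (n + 1) * (3 ^ n * S + (3 ^ n - 1) / 2)) := by
  set m := (3 ^ n - 1) / 2 with hmdef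
  have h3 : 2 * m + 1 = 3 ^ n := by
    obtain ⟨c, hc⟩ := Odd.pow (n := n) (by decide : Odd 3)
    omega
  set S' := 3 ^ n * S + m with hS'def
  have hgeom : ∑ i : Fin n, 3 ^ (i : ℕ) = m := by
    have key : ∀ k : ℕ, 2 * (∑ i ∈ Finset.range k, 3 ^ i) + 1 = 3 ^ k := by
      intro k
      induction k with
      | zero => simp
      | succ k ih => rw [Finset.sum_range_succ, pow_succ]; omega
    have hk := key n
    rw [Fin.sum_univ_eq_sum_range (fun i => 3 ^ i)]
    omega
  have hS'pos : 1 ≤ S' := by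
    have h33 : 3 ≤ 3 ^ n := by
      calc 3 = 3 ^ 1 := by norm_num
      _ ≤ 3 ^ n := Nat.pow_le_pow_right (by norm_num) hn
    omega
  constructor
  · rintro ⟨A, hA⟩
    refine ⟨Finset.univ.image (fun i => (i, decide (i ∈ A))), ?_⟩
    rw [Finset.sum_image (fun a _ b _ h => congrArg Prod.fst h)]
    have step : ∀ i ∈ (Finset.univ : Finset (Fin n)),
        (if ((i, decide (i ∈ A)) : Fin n × Bool).2 = true then
            3 ^ (i : ℕ) + 3 ^ n * s i + S' else 3 ^ (i : ℕ) + S')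
        = 3 ^ (i : ℕ) + 3 ^ n * (if i ∈ A then s i else 0) + S' := by
      intro i _
      by_cases h : i ∈ A <;> simp [h]
    rw [Finset.sum_congr rfl step]
    rw [Finset.sum_add_distrib, Finset.sum_add_distrib, hgeom, ← Finset.mul_sum,
        Finset.sum_const, Finset.card_univ, Fintype.card_fin, smul_eq_mul]
    have hsum : ∑ i : Fin n, (if i ∈ A then s i else 0) = S := by
      rw [Finset.sum_ite_mem, Finset.univ_inter, hA]
    rw [hsum]
    ring
  · rintro ⟨B, hB⟩
    set P := ∑ x ∈ B, 3 ^ ((x.1 : Fin n) : ℕ) with hPdef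
    set Q := ∑ x ∈ B, (if x.2 then s x.1 else 0) with hQdef
    set k := B.card with hkdef
    have hsplit : P + 3 ^ n * Q + k * S' = (n + 1) * S' := by
      rw [← hB]
      have step : ∀ x ∈ B,
          (if x.2 = true then 3 ^ ((x.1 : Fin n) : ℕ) + 3 ^ n * s x.1 + S'
           else 3 ^ ((x.1 : Fin n) : ℕ) + S')
          = 3 ^ ((x.1 : Fin n) : ℕ) + 3 ^ n * (if x.2 then s x.1 else 0) + S' := by
        rintro ⟨i, b⟩ _
        cases b <;> simp
      rw [Finset.sum_congr rfl step, Finset.sum_add_distrib, Finset.sum_add_distrib,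
        ← Finset.mul_sum, Finset.sum_const, smul_eq_mul]
    have hPle : P ≤ 2 * m := by
      calc P ≤ ∑ x : Fin n × Bool, 3 ^ ((x.1 : Fin n) : ℕ) :=
            Finset.sum_le_sum_of_subset (Finset.subset_univ B)
      _ = 2 * m := by
            rw [Fintype.sum_prod_type]
            simp only [Fintype.sum_bool]
            rw [Finset.sum_add_distrib, hgeom]
            omega
    have hQle : Q ≤ 2 * S := by
      calc Q ≤ ∑ x : Fin n × Bool, (if x.2 then s x.1 else 0) :=
            Finset.sum_le_sum_of_subset (Finset.subset_univ B)
      _ = 2 * S := by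
            rw [Fintype.sum_prod_type]
            simp only [Fintype.sum_bool]
            simpa using hs
    have hkP : k ≤ P := by
      have := Finset.card_nsmul_le_sum B (fun x => 3 ^ ((x.1 : Fin n) : ℕ)) 1
        (fun x _ => Nat.one_le_pow _ _ (by norm_num))
      simpa using this
    have hPstrict : B ≠ Finset.univ → P < 2 * m := by
      intro hne
      have hss : B ⊂ Finset.univ := (Finset.subset_univ B).ssubset_of_ne hne
      obtain ⟨x, hxu, hxB⟩ := Finset.exists_of_ssubset hss
      calc P < ∑ x : Fin n × Bool, 3 ^ ((x.1 : Fin n) : ℕ) := by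
            refine Finset.sum_lt_sum_of_subset hss.subset hxu hxB
              (Nat.one_le_pow _ _ (by norm_num)) (fun j _ _ => Nat.zero_le _)
      _ = 2 * m := by
            rw [Fintype.sum_prod_type]
            simp only [Fintype.sum_bool]
            rw [Finset.sum_add_distrib, hgeom]
            omega
    have hkle : k ≤ n + 1 := by
      have h1 : k * S' ≤ (n + 1) * S' := by omega
      exact Nat.le_of_mul_le_mul_right h1 hS'pos
    -- rule out k = n + 1
    have hkn1 : k ≠ n + 1 := by
      intro hk
      rw [hk] at hsplit
      have : P = 0 := by omega
      omega
    have hkn : k ≤ n := by omega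
    have hkey : P + 3 ^ n * Q = (n + 1 - k) * S' := by
      have : (n + 1) = (n + 1 - k) + k := by omega
      rw [this, add_mul] at hsplit
      omega
    -- rule out k < n
    have hEQ : 3 ^ n * Q ≤ 3 ^ n * (2 * S) := Nat.mul_le_mul_left _ hQle
    have hkeqn : k = n := by
      by_contra hne
      have hklt : k < n := by omega
      have hd2 : 2 ≤ n + 1 - k := by omega
      have h2S' : 2 * S' ≤ (n + 1 - k) * S' := Nat.mul_le_mul_right _ hd2
      have hPeq : P = 2 * m := by
        have hES : 3 ^ n * (2 * S) = 2 * (3 ^ n * S) := by ring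
        omega
      have hBuniv : B = Finset.univ := by
        by_contra hne'
        have := hPstrict hne'
        omega
      have hcard : k = 2 * n := by
        rw [hkdef, hBuniv, Finset.card_univ]
        simp [Fintype.card_prod]
        ring
      omega
    rw [hkeqn] at hkey
    have hkey' : P + 3 ^ n * Q = 3 ^ n * S + m := by
      have : n + 1 - n = 1 := by omega
      rw [this, one_mul] at hkey
      exact hkey
    have hQS : Q = S := by
      rcases Nat.lt_trichotomy Q S with h | h | h
      · have : 3 ^ n * Q + 3 ^ n ≤ 3 ^ n * S := by
          have := Nat.mul_le_mul_left (3 ^ n) (Nat.succ_le_of_lt h)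
          rw [Nat.mul_succ] at this
          omega
        omega
      · exact h
      · have : 3 ^ n * S + 3 ^ n ≤ 3 ^ n * Q := by
          have := Nat.mul_le_mul_left (3 ^ n) (Nat.succ_le_of_lt h)
          rw [Nat.mul_succ] at this
          omega
        omega
    refine ⟨(B.filter (fun x => x.2 = true)).image Prod.fst, ?_⟩
    rw [Finset.sum_image]
    · rw [← hQS, hQdef, Finset.sum_filter]
    · intro x hx y hy h
      simp only [Finset.mem_coe, Finset.mem_filter] at hx hy
      exact Prod.ext h (hx.2.trans hy.2.symm)
end

section
/- Let n ≥ 1 and let s : Fin n → ℕ satisfy ∑_i s i = 2·S. Put S' = 3^n·S + (3^n − 1)/2 and define t' : (Fin n × Bool) → ℕ by t' (i, true) = 3^(i:ℕ) + 3^n · (s i) and t' (i, false) = 3^(i:ℕ). If a finite subset B ⊆ Fin n × Bool satisfies ∑_{x ∈ B} t' x = S', then for every i ∈ Fin n exactly one of the pairs (i, true) and (i, false) belongs to B. -/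
/-!
Let `c i ∈ {0, 1, 2}` count how many of `(i, true)`, `(i, false)` lie in `B`. The sum over `B`
is `∑ c i * 3^i + 3^n * T` for some `T`, while `(3^n - 1) / 2 = ∑ 3^i`. Both digit sums are
below `3^n`, so comparing residues mod `3^n` gives `∑ c i * 3^i = ∑ 3^i`, and uniqueness of
base-3 expansions forces `c i = 1` for every `i`.
-/

open Finset

theorem Nat.ofDigits_ofFn (b : ℕ) {n : ℕ} (c : Fin n → ℕ) :
    ofDigits b (List.ofFn c) = ∑ i, c i * b ^ (i : ℕ) := by
  induction n with
  | zero => simp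
  | succ n ih =>
    rw [List.ofFn_succ, ofDigits_cons, ih, Fin.sum_univ_succ, mul_sum]
    simp only [Fin.val_zero, pow_zero, mul_one, Fin.val_succ, pow_succ]
    congr 1
    exact sum_congr rfl fun i _ => by ring

theorem Nat.sum_digits_mul_pow_lt {b n : ℕ} (hb : 1 < b) {c : Fin n → ℕ}
    (hc : ∀ i, c i < b) :
    ∑ i, c i * b ^ (i : ℕ) < b ^ n := by
  simpa [← ofDigits_ofFn] using
    ofDigits_lt_base_pow_length hb (l := List.ofFn c) (by simpa using hc)

theorem Nat.eq_of_sum_digits_mul_pow_eq {b n : ℕ} (hb : 1 < b) {c d : Fin n → ℕ}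
    (hc : ∀ i, c i < b) (hd : ∀ i, d i < b)
    (h : ∑ i, c i * b ^ (i : ℕ) = ∑ i, d i * b ^ (i : ℕ)) : c = d := by
  rw [← ofDigits_ofFn, ← ofDigits_ofFn] at h
  exact List.ofFn_injective <|
    ofDigits_inj_of_len_eq hb (by simp) (by simpa using hc) (by simpa using hd) h

theorem Finset.sum_prod_bool {α M : Type*} [Fintype α] [DecidableEq α] [AddCommMonoid M]
    (B : Finset (α × Bool)) (f : α × Bool → M) :
    ∑ x ∈ B, f x = ∑ a, ((if (a, true) ∈ B then f (a, true) else 0) +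
      if (a, false) ∈ B then f (a, false) else 0) := by
  rw [← univ_inter B, ← sum_ite_mem, Fintype.sum_prod_type]
  simp only [Fintype.sum_bool, univ_inter]

theorem partition'_pairing_general (n S : ℕ) (s : Fin n → ℕ)
    (B : Finset (Fin n × Bool))
    (hB : ∑ x ∈ B,
        (if x.2 then 3 ^ (x.1 : ℕ) + 3 ^ n * s x.1 else 3 ^ (x.1 : ℕ)) =
        3 ^ n * S + (3 ^ n - 1) / 2) :
    ∀ i : Fin n,
      ((i, true) ∈ B ∧ (i, false) ∉ B) ∨ ((i, true) ∉ B ∧ (i, false) ∈ B) := by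
  set c : Fin n → ℕ := fun i =>
    (if (i, true) ∈ B then 1 else 0) + if (i, false) ∈ B then 1 else 0
  have hc : ∀ i, c i < 3 := fun i => by simp only [c]; split_ifs <;> norm_num
  have hsplit : ∑ x ∈ B, (if x.2 then 3 ^ (x.1 : ℕ) + 3 ^ n * s x.1 else 3 ^ (x.1 : ℕ)) =
      ∑ i, c i * 3 ^ (i : ℕ) + 3 ^ n * ∑ i, if (i, true) ∈ B then s i else 0 := by
    rw [sum_prod_bool, mul_sum, ← sum_add_distrib]
    refine sum_congr rfl fun i _ => ?_
    simp only [c, Bool.false_eq_true, ↓reduceIte]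
    split_ifs <;> ring
  have hones : (3 ^ n - 1) / 2 = ∑ i : Fin n, 1 * 3 ^ (i : ℕ) := by
    simp only [one_mul, Fin.sum_univ_eq_sum_range (3 ^ ·), Nat.geomSum_eq (by norm_num : 2 ≤ 3)]
  have hdigits : ∑ i, c i * 3 ^ (i : ℕ) = ∑ i : Fin n, 1 * 3 ^ (i : ℕ) := by
    refine Nat.ModEq.eq_of_lt_of_lt ?_ (Nat.sum_digits_mul_pow_lt (by norm_num) hc)
      (Nat.sum_digits_mul_pow_lt (by norm_num) fun _ => by norm_num)
    rw [hsplit, hones] at hB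
    calc _ ≡ _ [MOD 3 ^ n] := (Nat.add_mul_mod_self_left _ _ _).symm
      _ = _ := hB
      _ ≡ _ [MOD 3 ^ n] := Nat.mul_add_mod _ _ _
  intro i
  have hi : c i = 1 :=
    congrFun (Nat.eq_of_sum_digits_mul_pow_eq (by norm_num) hc (fun _ => by norm_num) hdigits) i
  simp only [c] at hi
  split_ifs at hi <;> simp_all

/-- Pairing claim in the proof that Partition′ is NP-complete: any subset of the
doubled sequence summing to `S'` contains, for each index `i`, exactly one of
`(i, true)` and `(i, false)`. -/
theorem partition'_pairing (n S : ℕ) (hn : 1 ≤ n) (s : Fin n → ℕ)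
    (hs : ∑ i, s i = 2 * S)
    (B : Finset (Fin n × Bool))
    (hB : ∑ x ∈ B,
        (if x.2 then 3 ^ (x.1 : ℕ) + 3 ^ n * s x.1 else 3 ^ (x.1 : ℕ)) =
        3 ^ n * S + (3 ^ n - 1) / 2) :
    ∀ i : Fin n,
      ((i, true) ∈ B ∧ (i, false) ∉ B) ∨ ((i, true) ∉ B ∧ (i, false) ∈ B) :=
  partition'_pairing_general n S s B hB
end

section
/- Let n ≥ 1 and let s : Fin n → ℕ satisfy ∑_i s i = 2·S. Put S' = 3^n·S + (3^n − 1)/2 and define t : (Fin n × Bool) → ℕ by t (i, true) = 3^(i:ℕ) + 3^n · (s i) + S' and t (i, false) = 3^(i:ℕ) + S'. If a finite subset B ⊆ Fin n × Bool satisfies ∑_{x ∈ B} t x = (n + 1) · S', then B has exactly n elements. -/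
/-!
Write `G = ∑_{i<n} 3^i = (3^n - 1)/2` and `S' = 3^n S + G`. Every summand of `∑_B t` is `S'`
plus the excess `3^i + 3^n [b] s i`, so the total excess `E` equals `(n + 1 - |B|) S'`.
Each power `3^i` occurs at most twice, so the powers contribute at least `|B|` and at most
`2G - (2n - |B|)`, while the `s`-part is at most `3^n · 2S`; hence `|B| ≤ E ≤ 2S' - (2n - |B|)`.
The lower bound rules out `|B| > n`, the upper one `|B| < n`.
-/

open Finset

lemma three_pow_sub_one_div_two (n : ℕ) : (3 ^ n - 1) / 2 = ∑ i ∈ range n, 3 ^ i := by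
  have := geom_sum_mul_add 2 n
  norm_num at this
  omega

lemma card_le_sum_of_one_le {α : Type*} (B : Finset α) (w : α → ℕ) (hw : ∀ x, 1 ≤ w x) :
    #B ≤ ∑ x ∈ B, w x := by
  simpa using card_nsmul_le_sum B w 1 fun x _ => hw x

lemma sum_add_card_compl_le_sum {α : Type*} [Fintype α] [DecidableEq α] (B : Finset α)
    (w : α → ℕ) (hw : ∀ x, 1 ≤ w x) : ∑ x ∈ B, w x + #Bᶜ ≤ ∑ x, w x := by
  rw [← sum_add_sum_compl B w]
  exact Nat.add_le_add_left (card_le_sum_of_one_le Bᶜ w hw) _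

lemma sum_three_pow_fst (n : ℕ) :
    ∑ x : Fin n × Bool, 3 ^ (x.1 : ℕ) = 2 * ∑ i ∈ range n, 3 ^ i := by
  rw [Fintype.sum_prod_type, ← Fin.sum_univ_eq_sum_range, mul_sum]
  simp [two_mul]

lemma sum_ite_snd_le_sum {α : Type*} [Fintype α] (f : α → ℕ) (B : Finset (α × Bool)) :
    ∑ x ∈ B, (if x.2 then f x.1 else 0) ≤ ∑ a, f a :=
  calc ∑ x ∈ B, (if x.2 then f x.1 else 0)
      ≤ ∑ x : α × Bool, (if x.2 then f x.1 else 0) := sum_le_sum_of_subset (subset_univ B)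
    _ = ∑ a, f a := by simp [Fintype.sum_prod_type]

lemma eq_of_add_mul_eq_succ_mul {c n σ ρ T : ℕ} (h : σ + ρ + c * T = (n + 1) * T)
    (hc : c ≤ σ) (hσρ : σ + ρ + 2 * n ≤ 2 * T + c) : c = n := by
  rcases lt_trichotomy c n with hlt | heq | hgt
  · have : (c + 2) * T ≤ (n + 1) * T := Nat.mul_le_mul_right T (by omega)
    linarith
  · exact heq
  · have : (n + 1) * T ≤ c * T := Nat.mul_le_mul_right T hgt
    linarith

theorem partition'_card_general (n S : ℕ) (s : Fin n → ℕ)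
    (hs : ∑ i, s i = 2 * S)
    (B : Finset (Fin n × Bool))
    (hB : ∑ x ∈ B,
        (if x.2 then 3 ^ (x.1 : ℕ) + 3 ^ n * s x.1 + (3 ^ n * S + (3 ^ n - 1) / 2)
         else 3 ^ (x.1 : ℕ) + (3 ^ n * S + (3 ^ n - 1) / 2)) =
        (n + 1) * (3 ^ n * S + (3 ^ n - 1) / 2)) :
    B.card = n := by
  rw [three_pow_sub_one_div_two] at hB
  set G := ∑ i ∈ range n, 3 ^ i
  set σ := ∑ x ∈ B, 3 ^ (x.1 : ℕ)
  set τ := ∑ x ∈ B, if x.2 then s x.1 else 0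
  have hsum : σ + 3 ^ n * τ + #B * (3 ^ n * S + G) = (n + 1) * (3 ^ n * S + G) := by
    rw [← hB, mul_sum, ← smul_eq_mul, ← sum_const, ← sum_add_distrib, ← sum_add_distrib]
    refine sum_congr rfl fun x _ => ?_
    rcases x with ⟨i, _ | _⟩ <;> simp
  have hpos : ∀ x : Fin n × Bool, 1 ≤ 3 ^ (x.1 : ℕ) := fun _ => Nat.one_le_pow _ _ (by norm_num)
  have hσ : σ + #Bᶜ ≤ 2 * G := sum_three_pow_fst n ▸ sum_add_card_compl_le_sum B _ hpos
  have hcompl : #Bᶜ = 2 * n - #B := by simp [card_compl, mul_comm]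
  have hB_le : #B ≤ 2 * n := by simpa [mul_comm] using card_le_univ B
  have hτ : 3 ^ n * τ ≤ 3 ^ n * (2 * S) :=
    Nat.mul_le_mul_left _ (hs ▸ sum_ite_snd_le_sum s B)
  refine eq_of_add_mul_eq_succ_mul hsum (card_le_sum_of_one_le B _ hpos) ?_
  linarith [show σ + 2 * n ≤ 2 * G + #B by omega]

/-- Cardinality claim in the proof that Partition′ is NP-complete: any subset of the
padded sequence summing to `(n+1)·S'` has exactly `n` elements. -/
theorem partition'_card (n S : ℕ) (hn : 1 ≤ n) (s : Fin n → ℕ)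
    (hs : ∑ i, s i = 2 * S)
    (B : Finset (Fin n × Bool))
    (hB : ∑ x ∈ B,
        (if x.2 then 3 ^ (x.1 : ℕ) + 3 ^ n * s x.1 + (3 ^ n * S + (3 ^ n - 1) / 2)
         else 3 ^ (x.1 : ℕ) + (3 ^ n * S + (3 ^ n - 1) / 2)) =
        (n + 1) * (3 ^ n * S + (3 ^ n - 1) / 2)) :
    B.card = n :=
  partition'_card_general n S s hs B hB
end

section
/- Let n ≥ 1 and let s : Fin n → ℕ satisfy ∑_i s i = 2·S. Put S' = 3^n·S + (3^n − 1)/2 and define t' : (Fin n × Bool) → ℕ by t' (i, true) = 3^(i:ℕ) + 3^n · (s i) and t' (i, false) = 3^(i:ℕ). Then there exists a finite subset B ⊆ Fin n × Bool with ∑_{x ∈ B} t' x = S' if and only if there exists a finite subset A ⊆ Fin n with ∑_{i ∈ A} s i = S. -/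
open Finset

private lemma geom3 (n : ℕ) : 2 * ∑ i ∈ Finset.range n, 3 ^ i + 1 = 3 ^ n := by
  induction n with
  | zero => simp
  | succ n ih => rw [Finset.sum_range_succ]; rw [pow_succ]; omega

/-- First stage of the reduction from Partition to Partition′: the auxiliary sequence
`s'_i = 3^i + 3^n·s_i`, `o'_i = 3^i` can be split into a part summing to `S'` exactly
when the original sequence can be partitioned. -/
theorem partition'_aux (n S : ℕ) (hn : 1 ≤ n) (s : Fin n → ℕ)
    (hs : ∑ i, s i = 2 * S) :
    (∃ B : Finset (Fin n × Bool),
        ∑ x ∈ B, (if x.2 then 3 ^ (x.1 : ℕ) + 3 ^ n * s x.1 else 3 ^ (x.1 : ℕ)) =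
          3 ^ n * S + (3 ^ n - 1) / 2) ↔
      (∃ A : Finset (Fin n), ∑ i ∈ A, s i = S) := by
  set E : ℕ := ∑ i : Fin n, 3 ^ (i : ℕ) with hE
  have hEr : E = ∑ i ∈ Finset.range n, 3 ^ i := Fin.sum_univ_eq_sum_range _ n
  have hgeom : 2 * E + 1 = 3 ^ n := by rw [hEr]; exact geom3 n
  have hdiv : (3 ^ n - 1) / 2 = E := by omega
  rw [hdiv]
  constructor
  · rintro ⟨B, hB⟩
    have hsplit : ∑ x ∈ B, (if x.2 then 3 ^ (x.1 : ℕ) + 3 ^ n * s x.1 else 3 ^ (x.1 : ℕ))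
        = (∑ x ∈ B, 3 ^ (x.1 : ℕ)) + 3 ^ n * ∑ x ∈ B.filter (fun x => x.2), s x.1 := by
      have key : ∀ x ∈ B, (if x.2 then 3 ^ (x.1 : ℕ) + 3 ^ n * s x.1 else 3 ^ (x.1 : ℕ))
          = 3 ^ (x.1 : ℕ) + (if x.2 = true then 3 ^ n * s x.1 else 0) := by
        intro x _; by_cases h : x.2 <;> simp [h]
      rw [Finset.sum_congr rfl key, Finset.sum_add_distrib, ← Finset.sum_filter,
        ← Finset.mul_sum]
    rw [hsplit] at hB
    set a := ∑ x ∈ B, 3 ^ (x.1 : ℕ) with ha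
    set T := ∑ x ∈ B.filter (fun x => x.2), s x.1 with hT
    have haE : a ≤ 2 * E := by
      calc a ≤ ∑ x : Fin n × Bool, 3 ^ (x.1 : ℕ) :=
            Finset.sum_le_sum_of_subset (Finset.subset_univ B)
        _ = 2 * E := by
          rw [Fintype.sum_prod_type]
          simp only [Finset.sum_const, Finset.card_univ, Fintype.card_bool, smul_eq_mul]
          rw [← Finset.mul_sum, hE]
    have hP : 0 < 3 ^ n := by positivity
    have hTS : T = S := by
      have h1 : (3 ^ n * T + a) / 3 ^ n = T := by
        rw [Nat.mul_add_div hP, Nat.div_eq_of_lt (by omega)]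
        omega
      have h2 : (3 ^ n * S + E) / 3 ^ n = S := by
        rw [Nat.mul_add_div hP, Nat.div_eq_of_lt (by omega)]
        omega
      rw [← h1, add_comm, hB, h2]
    refine ⟨(B.filter (fun x => x.2)).image Prod.fst, ?_⟩
    rw [Finset.sum_image, ← hT, hTS]
    intro x hx y hy hxy
    simp only [Finset.mem_coe, Finset.mem_filter] at hx hy
    exact Prod.ext hxy (hx.2.trans hy.2.symm)
  · rintro ⟨A, hA⟩
    refine ⟨A.image (fun i => (i, true)) ∪ Aᶜ.image (fun i => (i, false)), ?_⟩
    rw [Finset.sum_union, Finset.sum_image (by intro x _ y _ h; exact (Prod.mk.injEq ..).mp h |>.1),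
      Finset.sum_image (by intro x _ y _ h; exact (Prod.mk.injEq ..).mp h |>.1)]
    · have h1 : ∑ x ∈ A, (if true = true then 3 ^ (x : ℕ) + 3 ^ n * s x else 3 ^ (x : ℕ))
          = ∑ x ∈ A, 3 ^ (x : ℕ) + 3 ^ n * ∑ x ∈ A, s x := by
        simp [Finset.sum_add_distrib, Finset.mul_sum]
      have h2 : ∑ x ∈ Aᶜ, (if false = true then 3 ^ (x : ℕ) + 3 ^ n * s x else 3 ^ (x : ℕ))
          = ∑ x ∈ Aᶜ, 3 ^ (x : ℕ) := by simp
      have h3 : (∑ x ∈ A, 3 ^ (x : ℕ)) + ∑ x ∈ Aᶜ, 3 ^ (x : ℕ) = E := by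
        rw [hE, ← Finset.sum_add_sum_compl A]
      rw [h1, h2, hA]
      linarith
    · rw [Finset.disjoint_left]
      rintro ⟨i, b⟩ h1 h2
      simp only [Finset.mem_image] at h1 h2
      obtain ⟨x, _, hx⟩ := h1
      obtain ⟨y, _, hy⟩ := h2
      rw [← hx] at hy
      simp at hy
end

section
/- Let s : Fin n → ℕ satisfy ∑_i s i = 2·S. Then there exists a finite subset A ⊆ Fin n such that ∑_{i ∈ A} s i ≤ S and ∑_{i ∉ A} s i ≤ ∑_{i ∈ A} s i, if and only if there exists a finite subset A ⊆ Fin n with ∑_{i ∈ A} s i = S. -/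
theorem le_and_le_iff_eq_of_add_eq_add_self {M : Type*} [AddCommMonoid M] [LinearOrder M]
    [IsOrderedCancelAddMonoid M] {a b c : M} (h : a + b = c + c) :
    a ≤ c ∧ b ≤ a ↔ a = c := by
  constructor
  · rintro ⟨hac, hba⟩
    refine hac.eq_of_not_lt fun hlt => ?_
    exact (add_lt_add_of_lt_of_le hlt (hba.trans hac)).ne h
  · rintro rfl
    exact ⟨le_rfl, (add_left_cancel h).le⟩

theorem Finset.sum_le_and_sum_compl_le_iff {ι M : Type*} [Fintype ι] [DecidableEq ι]
    [AddCommMonoid M] [LinearOrder M] [IsOrderedCancelAddMonoid M] {s : ι → M} {S : M}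
    (hs : ∑ i, s i = S + S) (A : Finset ι) :
    (∑ i ∈ A, s i ≤ S ∧ ∑ i ∈ Aᶜ, s i ≤ ∑ i ∈ A, s i) ↔ ∑ i ∈ A, s i = S :=
  le_and_le_iff_eq_of_add_eq_add_self ((sum_add_sum_compl A s).trans hs)

/-- Correctness of the reduction from Partition to plurality-weighted-$bribery with
two candidates: a bribery of the voters in `A` (each of weight and price `s i`) is
within budget `S` and makes `p` a winner iff some subset of the weights sums to `S`. -/
theorem partition_to_plurality_weighted_dollar_bribery (n S : ℕ) (s : Fin n → ℕ)
    (hs : ∑ i, s i = 2 * S) :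
    (∃ A : Finset (Fin n),
        (∑ i ∈ A, s i) ≤ S ∧ (∑ i ∈ Aᶜ, s i) ≤ ∑ i ∈ A, s i) ↔
      ∃ A : Finset (Fin n), ∑ i ∈ A, s i = S :=
  exists_congr (Finset.sum_le_and_sum_compl_le_iff (hs.trans (two_mul S)))
end

section
/- Let t, m : ℕ with t ≤ m, let B be a finite type with card B = 3·t, and let S : Fin m → Finset B with card (S j) = 3 for every j. For b ∈ B let ℓ b = card {j : Fin m | b ∈ S j} (so ℓ b ≤ m). Consider the approval election with candidate set C = Option B, distinguished candidate p = none, and voter set V = (Fin m) ⊕ (Σ b : B, Fin (m + 1 − ℓ b)) ⊕ (Fin (m − t)), where the approval set of a voter (inl j) is the image of S j in C, the approval set of a voter in the summand indexed by b is {some b}, and the approval set of each voter in the last summand is {none}; the approval score of a candidate c is the number of voters whose approval set contains c, and p is a winner if every candidate's approval score is at most p's approval score. Then there exists a new assignment g : V → Finset C of approval sets with card {v : V | g v ≠ (original approval set of v)} ≤ t under which p is a winner, if and only if there exists A ⊆ Fin m with card A = t and ∀ b ∈ B, ∃ j ∈ A, b ∈ S j. -/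
/-- The number of sets `S j` containing `b`. -/
def ellX3C {B : Type*} [Fintype B] [DecidableEq B] {m : ℕ} (S : Fin m → Finset B) (b : B) : ℕ :=
  (Finset.univ.filter fun j => b ∈ S j).card

/-- The voter set of the reduction from X3C to approval-bribery. -/
abbrev X3CVoter (B : Type*) [Fintype B] [DecidableEq B] (m t : ℕ) (S : Fin m → Finset B) :
    Type _ :=
  Fin m ⊕ (Σ b : B, Fin (m + 1 - ellX3C S b)) ⊕ Fin (m - t)

/-- The original approval sets of the voters in the reduction from X3C to
approval-bribery; the distinguished candidate `p` is `none`. -/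
def X3CApproval {B : Type*} [Fintype B] [DecidableEq B] {m t : ℕ} (S : Fin m → Finset B) :
    X3CVoter B m t S → Finset (Option B)
  | Sum.inl j => (S j).image some
  | Sum.inr (Sum.inl ⟨b, _⟩) => {some b}
  | Sum.inr (Sum.inr _) => {none}

open Finset

lemma card_filter_sum_type {α β : Type*} [Fintype α] [Fintype β] (p : α ⊕ β → Prop)
    [DecidablePred p] :
    (univ.filter p).card
      = (univ.filter fun a => p (Sum.inl a)).card + (univ.filter fun b => p (Sum.inr b)).card := by
  rw [← Fintype.card_subtype, ← Fintype.card_subtype, ← Fintype.card_subtype,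
    ← Fintype.card_sum]
  exact Fintype.card_congr Equiv.subtypeSum

lemma card_filter_sigma_type {ι : Type*} [Fintype ι] [DecidableEq ι] {f : ι → Type*}
    [∀ i, Fintype (f i)] (p : (Σ i, f i) → Prop) [DecidablePred p] :
    (univ.filter p).card = ∑ i, (univ.filter fun x => p ⟨i, x⟩).card := by
  rw [← Finset.univ_sigma_univ]
  have : (filter p (univ.sigma fun _ => univ))
      = univ.sigma fun i => filter (fun x => p ⟨i, x⟩) univ := by
    ext ⟨i, x⟩; simp
  rw [this, Finset.card_sigma]

lemma ellX3C_le {B : Type*} [Fintype B] [DecidableEq B] {m : ℕ} (S : Fin m → Finset B) (b : B) :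
    ellX3C S b ≤ m :=
  (Finset.card_filter_le _ _).trans_eq (by simp)

lemma card_filter_voter {B : Type*} [Fintype B] [DecidableEq B] {m t : ℕ}
    (S : Fin m → Finset B) (p : X3CVoter B m t S → Prop) [DecidablePred p] :
    (univ.filter p).card
      = (univ.filter fun j : Fin m => p (Sum.inl j)).card
        + (∑ b, (univ.filter fun x : Fin (m + 1 - ellX3C S b) =>
            p (Sum.inr (Sum.inl ⟨b, x⟩))).card)
        + (univ.filter fun k : Fin (m - t) => p (Sum.inr (Sum.inr k))).card := by
  rw [card_filter_sum_type, card_filter_sum_type, card_filter_sigma_type]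
  ring

lemma score_orig_none {B : Type*} [Fintype B] [DecidableEq B] {m t : ℕ}
    (S : Fin m → Finset B) :
    (univ.filter fun v : X3CVoter B m t S => none ∈ X3CApproval S v).card = m - t := by
  rw [card_filter_voter]
  simp [X3CApproval]

lemma score_orig_some {B : Type*} [Fintype B] [DecidableEq B] {m t : ℕ}
    (S : Fin m → Finset B) (b : B) :
    (univ.filter fun v : X3CVoter B m t S => some b ∈ X3CApproval S v).card = m + 1 := by
  rw [card_filter_voter]
  have h1 : (univ.filter fun j : Fin m => some b ∈ X3CApproval (t := t) S (Sum.inl j)).card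
      = ellX3C S b := by
    simp [X3CApproval, ellX3C]
  have h2 : (∑ b' : B, (univ.filter fun x : Fin (m + 1 - ellX3C S b') =>
      some b ∈ X3CApproval (t := t) S (Sum.inr (Sum.inl ⟨b', x⟩))).card)
      = m + 1 - ellX3C S b := by
    have : ∀ b' : B, (univ.filter fun x : Fin (m + 1 - ellX3C S b') =>
        some b ∈ X3CApproval (t := t) S (Sum.inr (Sum.inl ⟨b', x⟩))).card
        = if b' = b then m + 1 - ellX3C S b' else 0 := by
      intro b'
      simp only [X3CApproval, Finset.mem_singleton, Option.some.injEq]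
      by_cases h : b = b' <;> simp [h, eq_comm]
    rw [Finset.sum_congr rfl fun b' _ => this b', Finset.sum_ite_eq' univ b]
    simp
  have h3 : (univ.filter fun k : Fin (m - t) =>
      some b ∈ X3CApproval (t := t) S (Sum.inr (Sum.inr k))).card = 0 := by
    simp [X3CApproval]
  rw [h1, h2, h3]
  have := ellX3C_le S b
  omega

/-- number of elements approved (among `some`-candidates) by voter `v` originally -/
lemma covers_card {B : Type*} [Fintype B] [DecidableEq B] {m t : ℕ}
    (S : Fin m → Finset B) (hS : ∀ j, (S j).card = 3) (v : X3CVoter B m t S) :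
    (univ.filter fun b : B => some b ∈ X3CApproval S v).card
      = (match v with
        | Sum.inl _ => 3
        | Sum.inr (Sum.inl _) => 1
        | Sum.inr (Sum.inr _) => 0) := by
  rcases v with j | ⟨b', x⟩ | k
  · have : (univ.filter fun b : B => some b ∈ X3CApproval (t := t) S (Sum.inl j)) = S j := by
      ext b; simp [X3CApproval]
    simp [this, hS j]
  · have : (univ.filter fun b : B =>
        some b ∈ X3CApproval (t := t) S (Sum.inr (Sum.inl ⟨b', x⟩))) = {b'} := by
      ext b; simp [X3CApproval]
    simp [this]
  · simp [X3CApproval]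

/-- Correctness of the reduction from Exact-Cover-by-3-Sets to approval-bribery:
`p = none` can be made a winner by changing the approval sets of at most `t` voters
iff `B` has an exact cover of size `t` by sets from `S`. -/
theorem x3c_to_approval_bribery {B : Type*} [Fintype B] [DecidableEq B]
    (t m : ℕ) (htm : t ≤ m) (hB : Fintype.card B = 3 * t)
    (S : Fin m → Finset B) (hS : ∀ j, (S j).card = 3) :
    (∃ g : X3CVoter B m t S → Finset (Option B),
        (Finset.univ.filter fun v => g v ≠ X3CApproval S v).card ≤ t ∧
        ∀ c : Option B,
          (Finset.univ.filter fun v => c ∈ g v).card ≤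
            (Finset.univ.filter fun v => (none : Option B) ∈ g v).card) ↔
      ∃ A : Finset (Fin m), A.card = t ∧ ∀ b : B, ∃ j ∈ A, b ∈ S j := by
  constructor
  · rintro ⟨g, hg, hwin⟩
    set D : Finset (X3CVoter B m t S) := univ.filter (fun v => g v ≠ X3CApproval S v) with hD
    -- the score of `none` under `g` is at most `m`
    have h_none : (univ.filter fun v => (none : Option B) ∈ g v).card ≤ m := by
      have hsub : (univ.filter fun v => (none : Option B) ∈ g v)
          ⊆ D ∪ (univ.filter fun v => (none : Option B) ∈ X3CApproval S v) := by
        intro v hv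
        simp only [mem_filter, mem_univ, true_and] at hv
        by_cases h : g v = X3CApproval S v
        · exact Finset.mem_union_right _ (by simp [← h, hv])
        · exact Finset.mem_union_left _ (by simp [hD, h])
      calc (univ.filter fun v => (none : Option B) ∈ g v).card
          ≤ (D ∪ (univ.filter fun v => (none : Option B) ∈ X3CApproval S v)).card :=
            Finset.card_le_card hsub
        _ ≤ D.card + (univ.filter fun v => (none : Option B) ∈ X3CApproval S v).card :=
            Finset.card_union_le _ _
        _ ≤ t + (m - t) := by
            have := score_orig_none (t := t) S
            omega
        _ = m := by omega
    -- each `b` is touched by some bribed voter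
    have h_touch : ∀ b : B, ∃ v ∈ D, some b ∈ X3CApproval S v := by
      intro b
      by_contra h
      push_neg at h
      have hsub : (univ.filter fun v => some b ∈ X3CApproval S v)
          ⊆ (univ.filter fun v => some b ∈ g v) := by
        intro v hv
        simp only [mem_filter, mem_univ, true_and] at hv ⊢
        have hvD : v ∉ D := fun hvD => h v hvD hv
        simp only [hD, mem_filter, mem_univ, true_and, not_not] at hvD
        rw [hvD]; exact hv
      have := Finset.card_le_card hsub
      rw [score_orig_some] at this
      have := (hwin (some b)).trans h_none
      omega
    -- counting argument
    have hswap : ∑ b : B, (D.filter fun v => some b ∈ X3CApproval S v).card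
        = ∑ v ∈ D, (univ.filter fun b : B => some b ∈ X3CApproval S v).card := by
      simp only [Finset.card_filter]
      rw [Finset.sum_comm]
    have hlow : 3 * t ≤ ∑ b : B, (D.filter fun v => some b ∈ X3CApproval S v).card := by
      calc 3 * t = ∑ _b : B, 1 := by simp [hB]
        _ ≤ _ := Finset.sum_le_sum fun b _ => by
            obtain ⟨v, hvD, hv⟩ := h_touch b
            exact Finset.card_pos.2 ⟨v, Finset.mem_filter.2 ⟨hvD, hv⟩⟩
    have hup : ∀ v ∈ D, (univ.filter fun b : B => some b ∈ X3CApproval S v).card ≤ 3 := by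
      intro v _
      rw [covers_card S hS]
      rcases v with j | ⟨b', x⟩ | k <;> simp
    have hhigh : ∑ v ∈ D, (univ.filter fun b : B => some b ∈ X3CApproval S v).card
        ≤ 3 * D.card := by
      calc _ ≤ ∑ _v ∈ D, 3 := Finset.sum_le_sum hup
        _ = 3 * D.card := by rw [Finset.sum_const]; ring
    have hDt : D.card = t := by omega
    have hsum_eq : ∑ v ∈ D, (univ.filter fun b : B => some b ∈ X3CApproval S v).card
        = ∑ _v ∈ D, 3 := by
      have : (∑ _v ∈ D, 3) = 3 * D.card := by rw [Finset.sum_const]; ring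
      omega
    have h_all3 : ∀ v ∈ D, (univ.filter fun b : B => some b ∈ X3CApproval S v).card = 3 :=
      fun v hv => ((Finset.sum_eq_sum_iff_of_le hup).1 hsum_eq v hv)
    have h_inl : ∀ v ∈ D, ∃ j, v = Sum.inl j := by
      intro v hv
      have := h_all3 v hv
      rw [covers_card S hS] at this
      rcases v with j | ⟨b', x⟩ | k
      · exact ⟨j, rfl⟩
      · simp at this
      · simp at this
    refine ⟨univ.filter fun j => Sum.inl j ∈ D, ?_, ?_⟩
    · have hDA : D = (univ.filter fun j => Sum.inl j ∈ D).image Sum.inl := by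
        ext v
        constructor
        · intro hv
          obtain ⟨j, rfl⟩ := h_inl v hv
          exact Finset.mem_image.2 ⟨j, by simp [hv], rfl⟩
        · intro hv
          obtain ⟨j, hj, rfl⟩ := Finset.mem_image.1 hv
          simpa using (Finset.mem_filter.1 hj).2
      rw [hDA, Finset.card_image_of_injective _ Sum.inl_injective] at hDt
      exact hDt
    · intro b
      obtain ⟨v, hvD, hv⟩ := h_touch b
      obtain ⟨j, rfl⟩ := h_inl v hvD
      refine ⟨j, by simp [hvD], ?_⟩
      simpa [X3CApproval] using hv
  · rintro ⟨A, hA, hcov⟩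
    refine ⟨Sum.elim (fun j => if j ∈ A then ({none} : Finset (Option B))
        else (S j).image some) (fun w => X3CApproval S (Sum.inr w)), ?_, ?_⟩
    · refine le_trans (Finset.card_le_card ?_)
        (le_trans (Finset.card_image_le (f := Sum.inl)) hA.le)
      · intro v hv
        simp only [mem_filter, mem_univ, true_and] at hv
        rcases v with j | w
        · by_cases hj : j ∈ A
          · exact Finset.mem_image.2 ⟨j, hj, rfl⟩
          · exfalso; apply hv; simp [X3CApproval, hj]
        · exact absurd rfl hv
    · intro c
      have hnone : (univ.filter fun v : X3CVoter B m t S => (none : Option B) ∈ Sum.elim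
          (fun j => if j ∈ A then ({none} : Finset (Option B)) else (S j).image some)
          (fun w => X3CApproval S (Sum.inr w)) v).card = m := by
        rw [card_filter_voter]
        have h1 : (univ.filter fun j : Fin m => (none : Option B) ∈
            if j ∈ A then ({none} : Finset (Option B)) else (S j).image some) = A := by
          ext j
          by_cases hj : j ∈ A <;> simp [hj]
        simp only [Sum.elim_inl, Sum.elim_inr, h1, hA]
        simp [X3CApproval]
        erw [h1]
        omega
      rw [hnone]
      rcases c with _ | b
      · exact hnone.le
      · -- score of some b
        rw [card_filter_voter]
        obtain ⟨j₀, hj₀A, hj₀⟩ := hcov b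
        have hcnt : 1 ≤ (A.filter fun j => b ∈ S j).card :=
          Finset.card_pos.2 ⟨j₀, Finset.mem_filter.2 ⟨hj₀A, hj₀⟩⟩
        have h1 : (univ.filter fun j : Fin m => (some b : Option B) ∈
            if j ∈ A then ({none} : Finset (Option B)) else (S j).image some).card
            = ellX3C S b - (A.filter fun j => b ∈ S j).card := by
          have heq : (univ.filter fun j : Fin m => (some b : Option B) ∈
              if j ∈ A then ({none} : Finset (Option B)) else (S j).image some)
              = (univ.filter fun j => b ∈ S j) \ (A.filter fun j => b ∈ S j) := by
            ext j
            by_cases hj : j ∈ A <;> simp [hj]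
          have hss : (A.filter fun j => b ∈ S j) ⊆ (univ.filter fun j => b ∈ S j) := by
            intro j hj
            simp only [mem_filter] at hj ⊢
            exact ⟨mem_univ j, hj.2⟩
          rw [heq, Finset.card_sdiff_of_subset hss]
          rfl
        have h2 : (∑ b' : B, (univ.filter fun x : Fin (m + 1 - ellX3C S b') =>
            (some b : Option B) ∈ X3CApproval (t := t) S (Sum.inr (Sum.inl ⟨b', x⟩))).card)
            = m + 1 - ellX3C S b := by
          have : ∀ b' : B, (univ.filter fun x : Fin (m + 1 - ellX3C S b') =>
              (some b : Option B) ∈ X3CApproval (t := t) S (Sum.inr (Sum.inl ⟨b', x⟩))).card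
              = if b' = b then m + 1 - ellX3C S b' else 0 := by
            intro b'
            simp only [X3CApproval, Finset.mem_singleton, Option.some.injEq]
            by_cases h : b = b' <;> simp [h, eq_comm]
          rw [Finset.sum_congr rfl fun b' _ => this b', Finset.sum_ite_eq' univ b]
          simp
        have h3 : (univ.filter fun k : Fin (m - t) =>
            (some b : Option B) ∈ X3CApproval (t := t) S (Sum.inr (Sum.inr k))).card = 0 := by
          simp [X3CApproval]
        simp only [Sum.elim_inl, Sum.elim_inr] at *
        erw [h1, h2, h3]
        have hle : (A.filter fun j => b ∈ S j).card ≤ ellX3C S b := by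
          apply Finset.card_le_card
          intro j hj
          simp only [mem_filter] at hj ⊢
          exact ⟨mem_univ j, hj.2⟩
        have := ellX3C_le S b
        omega
end

section
/- Let V and C be finite types, f : V → C, and p ∈ C. For c ∈ C let score c = card {v : V | f v = c}. Then there exists g : V → C such that (∀ v, g v = p → f v = p) and (∀ c, card {v | g v = c} ≤ card {v | g v = p}), if and only if ∑_{c ∈ C, score c > score p} (score c − score p) ≤ ∑_{c ∈ C, score c < score p} (score p − score c). -/
/-- The plurality score of candidate `c` under vote function `f`. -/
def plScore {V C : Type*} [Fintype V] [DecidableEq C] (f : V → C) (c : C) : ℕ :=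
  (Finset.univ.filter fun v => f v = c).card

lemma sum_plScore {V C : Type*} [Fintype V] [Fintype C] [DecidableEq C] (f : V → C) :
    ∑ c, plScore f c = Fintype.card V := by
  rw [Fintype.card, Finset.card_eq_sum_card_fiberwise (fun v _ => Finset.mem_univ (f v))]
  rfl


lemma ineq_iff {V C : Type*} [Fintype V] [Fintype C] [DecidableEq C] (f : V → C) (p : C) :
    ((∑ c ∈ Finset.univ.filter fun c => plScore f p < plScore f c,
          (plScore f c - plScore f p)) ≤
        ∑ c ∈ Finset.univ.filter fun c => plScore f c < plScore f p,
          (plScore f p - plScore f c)) ↔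
      Fintype.card V ≤ Fintype.card C * plScore f p := by
  set s := plScore f
  have key : (∑ c ∈ Finset.univ.filter fun c => s p < s c, ((s c - s p : ℕ) : ℤ)) -
      ∑ c ∈ Finset.univ.filter fun c => s c < s p, ((s p - s c : ℕ) : ℤ) =
      (Fintype.card V : ℤ) - Fintype.card C * s p := by
    have h1 : ∀ c ∈ Finset.univ.filter fun c => s p < s c,
        ((s c - s p : ℕ) : ℤ) = (s c : ℤ) - s p := by
      intro c hc
      simp only [Finset.mem_filter] at hc
      exact_mod_cast Nat.cast_sub hc.2.le
    have h2 : ∀ c ∈ Finset.univ.filter fun c => s c < s p,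
        ((s p - s c : ℕ) : ℤ) = (s p : ℤ) - s c := by
      intro c hc
      simp only [Finset.mem_filter] at hc
      exact_mod_cast Nat.cast_sub hc.2.le
    rw [Finset.sum_congr rfl h1, Finset.sum_congr rfl h2,
      Finset.sum_filter, Finset.sum_filter, ← Finset.sum_sub_distrib]
    have h3 : ∀ c : C, ((if s p < s c then (s c : ℤ) - s p else 0) -
        (if s c < s p then (s p : ℤ) - s c else 0)) = (s c : ℤ) - s p := by
      intro c
      rcases lt_trichotomy (s p) (s c) with h | h | h <;>
        simp [h, not_lt_of_gt, le_of_eq, h.le]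
    rw [Finset.sum_congr rfl fun c _ => h3 c, Finset.sum_sub_distrib,
      Finset.sum_const, ← Nat.cast_sum]
    rw [sum_plScore f]
    simp only [Finset.card_univ, nsmul_eq_mul]
  constructor
  · intro h
    have : (0:ℤ) ≤ (Fintype.card C * s p : ℤ) - Fintype.card V := by
      have := key
      have hcast : ((∑ c ∈ Finset.univ.filter fun c => s p < s c, (s c - s p) : ℕ) : ℤ) ≤
          ((∑ c ∈ Finset.univ.filter fun c => s c < s p, (s p - s c) : ℕ) : ℤ) :=
        Nat.cast_le.mpr h
      push_cast at hcast
      linarith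
    have : (Fintype.card V : ℤ) ≤ (Fintype.card C * s p : ℤ) := by linarith
    exact_mod_cast this
  · intro h
    have h' : (Fintype.card V : ℤ) ≤ (Fintype.card C : ℤ) * s p := by exact_mod_cast h
    have hcast : ((∑ c ∈ Finset.univ.filter fun c => s p < s c, (s c - s p) : ℕ) : ℤ) ≤
        ((∑ c ∈ Finset.univ.filter fun c => s c < s p, (s p - s c) : ℕ) : ℤ) := by
      push_cast
      linarith
    exact_mod_cast hcast

lemma forward_dir {V C : Type*} [Fintype V] [Fintype C] [DecidableEq C] (f : V → C) (p : C)
    (g : V → C) (hg : ∀ v, g v = p → f v = p) (hw : ∀ c, plScore g c ≤ plScore g p) :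
    Fintype.card V ≤ Fintype.card C * plScore f p := by
  have h1 : plScore g p ≤ plScore f p := by
    apply Finset.card_le_card
    intro v hv
    simp only [Finset.mem_filter, Finset.mem_univ, true_and] at *
    exact hg v hv
  calc Fintype.card V = ∑ c, plScore g c := (sum_plScore g).symm
    _ ≤ ∑ _c : C, plScore g p := Finset.sum_le_sum fun c _ => hw c
    _ = Fintype.card C * plScore g p := by simp [Finset.sum_const, Finset.card_univ, mul_comm]
    _ ≤ Fintype.card C * plScore f p := Nat.mul_le_mul_left _ h1

lemma backward_dir {V C : Type*} [Fintype V] [Fintype C] [DecidableEq C] (f : V → C) (p : C)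
    (h : Fintype.card V ≤ Fintype.card C * plScore f p) :
    ∃ g : V → C, (∀ v, g v = p → f v = p) ∧ ∀ c, plScore g c ≤ plScore g p := by
  set n := plScore f p with hn_def
  rcases Nat.eq_zero_or_pos n with hn0 | hn
  · -- then card V = 0, V is empty
    rw [hn0, Nat.mul_zero] at h
    have hV : Fintype.card V = 0 := by omega
    refine ⟨f, fun v hv => hv, fun c => ?_⟩
    have : ∀ c, plScore f c = 0 := by
      intro c
      have := Finset.card_filter_le (Finset.univ : Finset V) (fun v => f v = c)
      simp only [Finset.card_univ] at this
      rw [plScore]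
      omega
    simp [this]
  · -- main case
    set S : Finset V := Finset.univ.filter (fun v => ¬ f v = p) with hS_def
    set T : Finset C := Finset.univ.filter (fun c => ¬ c = p) with hT_def
    set m := S.card with hm_def
    set k := T.card with hk_def
    have hmn : m + n = Fintype.card V := by
      rw [hm_def, hn_def, hS_def, plScore, add_comm]
      rw [Finset.card_filter_add_card_filter_not]
      exact Finset.card_univ
    have hk1 : k + 1 = Fintype.card C := by
      have : (Finset.univ.filter (fun c : C => c = p)).card = 1 := by
        rw [Finset.filter_eq']
        simp
      have h2 := Finset.card_filter_add_card_filter_not (s := (Finset.univ : Finset C))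
        (p := fun c : C => c = p)
      rw [hk_def, hT_def]
      rw [Finset.card_univ] at h2
      omega
    have hmk : m ≤ k * n := by
      have : m + n ≤ (k + 1) * n := by rw [hk1]; omega
      nlinarith
    -- equivalences
    let eS : S ≃ Fin m := S.equivFin
    let eT : T ≃ Fin k := T.equivFin
    have hdiv : ∀ (i : Fin m), (i : ℕ) / n < k := by
      intro i
      rw [Nat.div_lt_iff_lt_mul hn]
      exact lt_of_lt_of_le i.2 hmk
    let g : V → C := fun v =>
      if h : f v = p then p
      else (eT.symm ⟨(eS ⟨v, by simp [hS_def, h]⟩ : ℕ) / n, hdiv _⟩ : T)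
    have hgne : ∀ v (h : ¬ f v = p), g v ≠ p := by
      intro v h
      simp only [g, dif_neg h]
      have := (eT.symm ⟨(eS ⟨v, by simp [hS_def, h]⟩ : ℕ) / n, hdiv _⟩).2
      exact (Finset.mem_filter.mp this).2
    have hgp : ∀ v, g v = p ↔ f v = p := by
      intro v
      by_cases h : f v = p
      · simp [g, h]
      · exact ⟨fun hv => absurd hv (hgne v h), fun hv => absurd hv h⟩
    have hscore_p : plScore g p = n := by
      rw [plScore, hn_def, plScore]
      congr 1
      ext v
      simp [hgp v]
    refine ⟨g, fun v hv => (hgp v).mp hv, fun c => ?_⟩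
    rw [hscore_p]
    by_cases hc : c = p
    · rw [hc, hscore_p]
    · -- c ≠ p
      have hcT : c ∈ T := by simp [hT_def, hc]
      set j : Fin k := eT ⟨c, hcT⟩ with hj_def
      rw [plScore]
      have := Finset.card_le_card_of_injOn
        (f := fun v => if h : ¬ f v = p then ((eS ⟨v, by simp [hS_def, h]⟩ : Fin m) : ℕ) else 0)
        (s := Finset.univ.filter fun v => g v = c)
        (t := Finset.Ico ((j : ℕ) * n) ((j : ℕ) * n + n)) ?_ ?_
      · calc (Finset.univ.filter fun v => g v = c).card
            ≤ (Finset.Ico ((j : ℕ) * n) ((j : ℕ) * n + n)).card := this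
          _ = n := by rw [Nat.card_Ico]; omega
      · -- maps to
        intro v hv
        simp only [Finset.mem_coe, Finset.mem_filter, Finset.mem_univ, true_and] at hv
        have hvfp : ¬ f v = p := by
          intro hfv
          apply hc
          rw [← hv]
          simp [g, hfv]
        simp only [dif_pos hvfp]
        set i : Fin m := eS ⟨v, by simp [hS_def, hvfp]⟩ with hi_def
        have hgv : g v = (eT.symm ⟨(i : ℕ) / n, hdiv _⟩ : T) := by
          simp only [g, dif_neg hvfp]; rfl
        have hij : (⟨(i : ℕ) / n, hdiv _⟩ : Fin k) = j := by
          rw [hj_def]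
          have : eT.symm ⟨(i : ℕ) / n, hdiv _⟩ = ⟨c, hcT⟩ := by
            apply Subtype.ext
            rw [← hgv, hv]
          rw [← this, Equiv.apply_symm_apply]
        have hdivij : (i : ℕ) / n = (j : ℕ) := by
          rw [← hij]
        simp only [Finset.mem_coe, Finset.mem_Ico]
        constructor
        · rw [← hdivij]; exact Nat.div_mul_le_self _ _
        · have : (i : ℕ) / n < (j : ℕ) + 1 := by omega
          rw [Nat.div_lt_iff_lt_mul hn] at this
          calc (i : ℕ) < ((j:ℕ) + 1) * n := this
            _ = (j:ℕ) * n + n := by ring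
      · -- injOn
        intro v hv w hw hvw
        simp only [Finset.mem_coe, Finset.mem_filter, Finset.mem_univ, true_and] at hv hw
        have hvfp : ¬ f v = p := fun hfv => hc (by rw [← hv]; simp [g, hfv])
        have hwfp : ¬ f w = p := fun hfw => hc (by rw [← hw]; simp [g, hfw])
        simp only [dif_pos hvfp, dif_pos hwfp] at hvw
        have : (eS ⟨v, by simp [hS_def, hvfp]⟩ : Fin m) = eS ⟨w, by simp [hS_def, hwfp]⟩ :=
          Fin.ext hvw
        have := eS.injective this
        exact congrArg Subtype.val this

/-- Characterization of when a negative bribery (no voter is bribed to vote for `p`)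
can make `p` a plurality winner. -/
theorem plurality_negative_bribery_characterization
    {V C : Type*} [Fintype V] [Fintype C] [DecidableEq C] (f : V → C) (p : C) :
    (∃ g : V → C, (∀ v, g v = p → f v = p) ∧
        ∀ c, plScore g c ≤ plScore g p) ↔
      (∑ c ∈ Finset.univ.filter fun c => plScore f p < plScore f c,
          (plScore f c - plScore f p)) ≤
        ∑ c ∈ Finset.univ.filter fun c => plScore f c < plScore f p,
          (plScore f p - plScore f c) := by
  rw [ineq_iff]
  constructor
  · rintro ⟨g, hg, hw⟩
    exact forward_dir f p g hg hw
  · exact backward_dir f p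
end

section
/- Let V and C be finite types, f : V → C, p ∈ C, and π : V → ℕ a price function. For c ∈ C let score c = card {v : V | f v = c}. Assume ∑_{c ∈ C, score c > score p} (score c − score p) ≤ ∑_{c ∈ C, score c < score p} (score p − score c). Then the minimum, over all g : V → C satisfying (∀ v, g v = p → f v = p) and (∀ c, card {v | g v = c} ≤ card {v | g v = p}), of ∑_{v : g v ≠ f v} π v, equals ∑_{c ∈ C, score c > score p} (the minimum of ∑_{v ∈ U} π v over all subsets U of {v | f v = c} with card U = score c − score p). -/
/-- Optimal cost of a negative bribery making `p` a plurality winner: assuming a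
negative bribery is feasible, the minimum cost equals, summed over all candidates `c`
beating `p`, the cheapest way of taking `score c − score p` voters away from `c`. -/
theorem plurality_negative_dollar_bribery_opt
    {V C : Type*} [Fintype V] [Fintype C] [DecidableEq V] [DecidableEq C]
    (f : V → C) (p : C) (π : V → ℕ)
    (h : (∑ c ∈ Finset.univ.filter fun c => plScore f p < plScore f c,
            (plScore f c - plScore f p)) ≤
          ∑ c ∈ Finset.univ.filter fun c => plScore f c < plScore f p,
            (plScore f p - plScore f c)) :
    sInf {x : ℕ | ∃ g : V → C, (∀ v, g v = p → f v = p) ∧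
        (∀ c, plScore g c ≤ plScore g p) ∧
        x = ∑ v ∈ Finset.univ.filter fun v => g v ≠ f v, π v} =
      ∑ c ∈ Finset.univ.filter fun c => plScore f p < plScore f c,
        sInf {y : ℕ | ∃ U ⊆ Finset.univ.filter fun v => f v = c,
          U.card = plScore f c - plScore f p ∧ y = ∑ v ∈ U, π v} := by
  classical
  set B : Finset C := Finset.univ.filter (fun c => plScore f p < plScore f c) with hBdef
  set T : Finset C := Finset.univ.filter (fun c => plScore f c < plScore f p) with hTdef
  have hpB : p ∉ B := by simp [hBdef]
  have hpT : p ∉ T := by simp [hTdef]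
  have hBT : ∀ c, c ∈ B → c ∉ T := by
    intro c hc hc'
    rw [hBdef, Finset.mem_filter] at hc
    rw [hTdef, Finset.mem_filter] at hc'
    exact absurd (hc.2.trans hc'.2) (lt_irrefl _)
  -- choose optimal removal sets
  have hmin : ∀ c, ∃ U : Finset V, c ∈ B →
      (U ⊆ Finset.univ.filter (fun v => f v = c) ∧
       U.card = plScore f c - plScore f p ∧
       (∑ v ∈ U, π v) = sInf {y : ℕ | ∃ U ⊆ Finset.univ.filter fun v => f v = c,
          U.card = plScore f c - plScore f p ∧ y = ∑ v ∈ U, π v}) := by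
    intro c
    by_cases hc : c ∈ B
    · have hle : plScore f c - plScore f p ≤ (Finset.univ.filter (fun v => f v = c)).card :=
        Nat.sub_le _ _
      obtain ⟨U0, hU0, hcard0⟩ := Finset.exists_subset_card_eq hle
      have hne : {y : ℕ | ∃ U ⊆ Finset.univ.filter fun v => f v = c,
          U.card = plScore f c - plScore f p ∧ y = ∑ v ∈ U, π v}.Nonempty :=
        ⟨_, U0, hU0, hcard0, rfl⟩
      obtain ⟨U, hU, hcard, hy⟩ := Nat.sInf_mem hne
      exact ⟨U, fun _ => ⟨hU, hcard, hy.symm⟩⟩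
    · exact ⟨∅, fun hcc => absurd hcc hc⟩
  choose u hu using hmin
  have husub : ∀ c ∈ B, u c ⊆ Finset.univ.filter (fun v => f v = c) := fun c hc => (hu c hc).1
  have hucard : ∀ c ∈ B, (u c).card = plScore f c - plScore f p := fun c hc => (hu c hc).2.1
  have hdisj : ∀ c1 ∈ B, ∀ c2 ∈ B, c1 ≠ c2 → Disjoint (u c1) (u c2) := by
    intro c1 h1 c2 h2 hne
    rw [Finset.disjoint_left]
    intro v hv1 hv2
    have e1 := (Finset.mem_filter.mp (husub c1 h1 hv1)).2
    have e2 := (Finset.mem_filter.mp (husub c2 h2 hv2)).2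
    exact hne (e1.symm.trans e2)
  set U : Finset V := B.biUnion u with hUdef
  have hUcard : U.card = ∑ c ∈ B, (plScore f c - plScore f p) := by
    rw [hUdef, Finset.card_biUnion hdisj]
    exact Finset.sum_congr rfl hucard
  have hUf : ∀ v ∈ U, f v ∈ B ∧ v ∈ u (f v) := by
    intro v hv
    rw [hUdef, Finset.mem_biUnion] at hv
    obtain ⟨c, hc, hvc⟩ := hv
    have := (Finset.mem_filter.mp (husub c hc hvc)).2
    subst this
    exact ⟨hc, hvc⟩
  -- the slots
  have hcardle : Fintype.card ↥U ≤
      Fintype.card (Σ d : ↥T, Fin (plScore f p - plScore f d.1)) := by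
    rw [Fintype.card_coe, hUcard, Fintype.card_sigma]
    simp only [Fintype.card_fin]
    rw [Finset.sum_coe_sort T (fun d => plScore f p - plScore f d)]
    exact h
  obtain ⟨e⟩ := Function.Embedding.nonempty_of_card_le hcardle
  set g : V → C := fun v => if hv : v ∈ U then ((e ⟨v, hv⟩).1 : C) else f v with hgdef
  have hgU : ∀ v (hv : v ∈ U), g v ∈ T := by
    intro v hv
    rw [hgdef]
    simp only [dif_pos hv]
    exact (e ⟨v, hv⟩).1.2
  have hgnU : ∀ v, v ∉ U → g v = f v := by
    intro v hv; rw [hgdef]; simp only [dif_neg hv]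
  have hgne : ∀ v ∈ U, g v ≠ f v := by
    intro v hv heq
    exact hBT (f v) (hUf v hv).1 (heq ▸ hgU v hv)
  have hfilter : (Finset.univ.filter fun v => g v ≠ f v) = U := by
    ext v
    simp only [Finset.mem_filter, Finset.mem_univ, true_and]
    constructor
    · intro hne
      by_contra hv
      exact hne (hgnU v hv)
    · intro hv; exact hgne v hv
  -- g p score unchanged
  have hgp : (Finset.univ.filter fun v => g v = p) = (Finset.univ.filter fun v => f v = p) := by
    ext v
    simp only [Finset.mem_filter, Finset.mem_univ, true_and]
    by_cases hv : v ∈ U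
    · constructor
      · intro hgvp; exact absurd (hgvp ▸ hgU v hv) hpT
      · intro hfvp; exact absurd (hfvp ▸ (hUf v hv).1) hpB
    · rw [hgnU v hv]
  have hgpscore : plScore g p = plScore f p := by
    unfold plScore; rw [hgp]
  -- winner condition
  have hwin : ∀ c, plScore g c ≤ plScore g p := by
    intro c
    rw [hgpscore]
    by_cases hcB : c ∈ B
    · have hspc : plScore f p ≤ plScore f c :=
        le_of_lt (Finset.mem_filter.mp hcB).2
      have hset : (Finset.univ.filter fun v => g v = c) =
          (Finset.univ.filter fun v => f v = c) \ u c := by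
        ext v
        simp only [Finset.mem_sdiff, Finset.mem_filter, Finset.mem_univ, true_and]
        by_cases hv : v ∈ U
        · constructor
          · intro hgvc; exact absurd (hgvc ▸ hgU v hv) (hBT c hcB)
          · rintro ⟨hfvc, hvuc⟩
            exact absurd ((hfvc ▸ (hUf v hv).2 : v ∈ u c)) hvuc
        · rw [hgnU v hv]
          constructor
          · intro hfvc
            refine ⟨hfvc, fun hvuc => hv ?_⟩
            rw [hUdef, Finset.mem_biUnion]; exact ⟨c, hcB, hvuc⟩
          · exact fun h' => h'.1
      show (Finset.univ.filter fun v => g v = c).card ≤ plScore f p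
      rw [hset, Finset.card_sdiff_of_subset (husub c hcB), hucard c hcB]
      show plScore f c - (plScore f c - plScore f p) ≤ plScore f p
      rw [Nat.sub_sub_self hspc]
    · by_cases hcT : c ∈ T
      · have hscp : plScore f c ≤ plScore f p :=
          le_of_lt (Finset.mem_filter.mp hcT).2
        set M : Finset V := U.filter (fun v => g v = c) with hMdef
        have hMU : M ⊆ U := Finset.filter_subset _ _
        -- embed M into the fiber over c
        set Fc : Finset (Σ d : ↥T, Fin (plScore f p - plScore f d.1)) :=
          Finset.univ.filter (fun x => (x.1 : C) = c) with hFcdef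
        have hFccard : Fc.card = plScore f p - plScore f c := by
          have himg : Fc = Finset.image
              (fun i : Fin (plScore f p - plScore f c) =>
                (⟨⟨c, hcT⟩, i⟩ : Σ d : ↥T, Fin (plScore f p - plScore f d.1)))
              Finset.univ := by
            ext x
            simp only [hFcdef, Finset.mem_filter, Finset.mem_univ, true_and,
              Finset.mem_image]
            constructor
            · rcases x with ⟨d, j⟩
              intro hd
              have : d = ⟨c, hcT⟩ := Subtype.ext hd
              subst this
              exact ⟨j, rfl⟩
            · rintro ⟨i, rfl⟩; rfl
          rw [himg, Finset.card_image_of_injective _ (fun i j hij => by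
            simpa using hij), Finset.card_univ, Fintype.card_fin]
        have hMcard : M.card ≤ Fc.card := by
          have := Finset.card_le_card_of_injOn
            (f := fun x : ↥M => e ⟨x.1, hMU x.2⟩)
            (s := (Finset.univ : Finset ↥M)) (t := Fc)
            (by
              intro x _
              rw [hFcdef, Finset.mem_coe, Finset.mem_filter]
              refine ⟨Finset.mem_univ _, ?_⟩
              have hx := (Finset.mem_filter.mp x.2).2
              have hxg : g x.1 = ((e ⟨x.1, hMU x.2⟩).1 : C) := by
                rw [hgdef]; simp only [dif_pos (hMU x.2)]
              exact (hxg ▸ hx : ((e ⟨x.1, hMU x.2⟩).1 : C) = c))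
            (by
              intro a _ b _ hab
              have h2 : (a : V) = (b : V) :=
                congrArg (fun x : ↥U => (x : V)) (e.injective hab)
              exact Subtype.ext h2)
          simpa [Finset.card_univ] using this
        have hsub : (Finset.univ.filter fun v => g v = c) ⊆
            (Finset.univ.filter fun v => f v = c) ∪ M := by
          intro v hv
          have hgvc := (Finset.mem_filter.mp hv).2
          by_cases hvU : v ∈ U
          · exact Finset.mem_union_right _ (Finset.mem_filter.mpr ⟨hvU, hgvc⟩)
          · exact Finset.mem_union_left _
              (Finset.mem_filter.mpr ⟨Finset.mem_univ _, (hgnU v hvU) ▸ hgvc⟩)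
        calc plScore g c ≤ ((Finset.univ.filter fun v => f v = c) ∪ M).card :=
              Finset.card_le_card hsub
          _ ≤ (Finset.univ.filter fun v => f v = c).card + M.card :=
              Finset.card_union_le _ _
          _ ≤ plScore f c + (plScore f p - plScore f c) := by
              rw [hFccard] at hMcard
              exact Nat.add_le_add_left hMcard _
          _ = plScore f p := Nat.add_sub_cancel' hscp
      · -- score unchanged
        have hscp : plScore f c ≤ plScore f p := by
          by_contra hlt
          exact hcB (Finset.mem_filter.mpr ⟨Finset.mem_univ _, lt_of_not_ge hlt⟩)
        have hset : (Finset.univ.filter fun v => g v = c) =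
            (Finset.univ.filter fun v => f v = c) := by
          ext v
          simp only [Finset.mem_filter, Finset.mem_univ, true_and]
          by_cases hv : v ∈ U
          · constructor
            · intro hgvc; exact absurd (hgvc ▸ hgU v hv) hcT
            · intro hfvc; exact absurd (hfvc ▸ (hUf v hv).1) hcB
          · rw [hgnU v hv]
        show (Finset.univ.filter fun v => g v = c).card ≤ plScore f p
        rw [hset]; exact hscp
  -- cost of g equals the RHS
  have hcost : (∑ v ∈ Finset.univ.filter fun v => g v ≠ f v, π v) =
      ∑ c ∈ B, sInf {y : ℕ | ∃ U ⊆ Finset.univ.filter fun v => f v = c,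
          U.card = plScore f c - plScore f p ∧ y = ∑ v ∈ U, π v} := by
    rw [hfilter, hUdef, Finset.sum_biUnion]
    · exact Finset.sum_congr rfl (fun c hc => (hu c hc).2.2)
    · intro c1 h1 c2 h2 hne
      exact hdisj c1 h1 c2 h2 hne
  have hmem : (∑ c ∈ B, sInf {y : ℕ | ∃ U ⊆ Finset.univ.filter fun v => f v = c,
          U.card = plScore f c - plScore f p ∧ y = ∑ v ∈ U, π v}) ∈
      {x : ℕ | ∃ g : V → C, (∀ v, g v = p → f v = p) ∧
        (∀ c, plScore g c ≤ plScore g p) ∧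
        x = ∑ v ∈ Finset.univ.filter fun v => g v ≠ f v, π v} := by
    refine ⟨g, ?_, hwin, hcost.symm⟩
    intro v hgvp
    by_cases hv : v ∈ U
    · exact absurd (hgvp ▸ hgU v hv) hpT
    · rw [← hgnU v hv]; exact hgvp
  refine le_antisymm (Nat.sInf_le hmem) ?_
  refine le_csInf ⟨_, hmem⟩ ?_
  rintro x ⟨g', hg'p, hg'win, rfl⟩
  -- lower bound: any feasible bribery costs at least the RHS
  have hg'pscore : plScore g' p ≤ plScore f p := by
    apply Finset.card_le_card
    intro v hv
    rw [Finset.mem_filter] at hv ⊢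
    exact ⟨hv.1, hg'p v hv.2⟩
  have key : ∀ c ∈ B,
      sInf {y : ℕ | ∃ U ⊆ Finset.univ.filter fun v => f v = c,
          U.card = plScore f c - plScore f p ∧ y = ∑ v ∈ U, π v} ≤
      ∑ v ∈ (Finset.univ.filter fun v => f v = c).filter (fun v => g' v ≠ f v), π v := by
    intro c hc
    set W : Finset V := (Finset.univ.filter fun v => f v = c).filter (fun v => g' v ≠ f v)
      with hWdef
    have hcardW : plScore f c - plScore f p ≤ W.card := by
      have hsplit : W.card + ((Finset.univ.filter fun v => f v = c).filter
          (fun v => ¬ g' v ≠ f v)).card = plScore f c :=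
        Finset.card_filter_add_card_filter_not _
      have hNsub : (Finset.univ.filter fun v => f v = c).filter (fun v => ¬ g' v ≠ f v) ⊆
          Finset.univ.filter fun v => g' v = c := by
        intro v hv
        rw [Finset.mem_filter] at hv ⊢
        refine ⟨Finset.mem_univ _, ?_⟩
        have := not_not.mp hv.2
        rw [this]
        exact (Finset.mem_filter.mp hv.1).2
      have hN : ((Finset.univ.filter fun v => f v = c).filter
          (fun v => ¬ g' v ≠ f v)).card ≤ plScore f p :=
        le_trans (Finset.card_le_card hNsub) (le_trans (hg'win c) hg'pscore)
      omega
    obtain ⟨S, hS, hScard⟩ := Finset.exists_subset_card_eq hcardW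
    have hSsub : S ⊆ Finset.univ.filter fun v => f v = c :=
      hS.trans (Finset.filter_subset _ _)
    calc sInf {y : ℕ | ∃ U ⊆ Finset.univ.filter fun v => f v = c,
            U.card = plScore f c - plScore f p ∧ y = ∑ v ∈ U, π v} ≤ ∑ v ∈ S, π v :=
          Nat.sInf_le ⟨S, hSsub, hScard, rfl⟩
      _ ≤ ∑ v ∈ W, π v := Finset.sum_le_sum_of_subset hS
  calc (∑ c ∈ B, sInf {y : ℕ | ∃ U ⊆ Finset.univ.filter fun v => f v = c,
          U.card = plScore f c - plScore f p ∧ y = ∑ v ∈ U, π v})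
      ≤ ∑ c ∈ B, ∑ v ∈ (Finset.univ.filter fun v => f v = c).filter
          (fun v => g' v ≠ f v), π v := Finset.sum_le_sum key
    _ = ∑ v ∈ B.biUnion (fun c => (Finset.univ.filter fun v => f v = c).filter
          (fun v => g' v ≠ f v)), π v := by
        rw [Finset.sum_biUnion]
        intro c1 h1 c2 h2 hne
        exact Finset.disjoint_left.mpr (fun {v} hv1 hv2 =>
          hne (((Finset.mem_filter.mp (Finset.mem_filter.mp hv1).1).2).symm.trans
            ((Finset.mem_filter.mp (Finset.mem_filter.mp hv2).1).2)))
    _ ≤ ∑ v ∈ Finset.univ.filter fun v => g' v ≠ f v, π v := by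
        apply Finset.sum_le_sum_of_subset
        intro v hv
        rw [Finset.mem_biUnion] at hv
        obtain ⟨c, _, hvc⟩ := hv
        rw [Finset.mem_filter] at hvc ⊢
        exact ⟨Finset.mem_univ _, hvc.2⟩
end

section
/- Let n ≥ 1, let s : Fin n → ℕ satisfy ∑_i s i = 2·S, and consider the weighted plurality election with three candidates p, c₁, c₂ and voter set V = Option (Fin n), where the voter none has weight S and votes for p, and each voter some i has weight s i and votes for c₁; for a vote function g, the score of a candidate c is the total weight of voters v with g v = c, and p is a winner under g if every candidate's score is at most p's score. Then there exists g : V → {p, c₁, c₂} such that (∀ v, g v = p → the original vote of v is p) and p is a winner under g, if and only if there exists A ⊆ Fin n with ∑_{i ∈ A} s i = S. -/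
/-- Correctness of the reduction from Partition proving that
plurality-weighted-negative-bribery is NP-complete.  Candidates are `Fin 3`
(`p = 0`, `c₁ = 1`, `c₂ = 2`); the voter `none` has weight `S` and originally votes
for `p`, and each voter `some i` has weight `s i` and originally votes for `c₁`. -/
theorem partition_to_plurality_weighted_negative_bribery
    (n S : ℕ) (hn : 1 ≤ n) (s : Fin n → ℕ) (hs : ∑ i, s i = 2 * S) :
    (∃ g : Option (Fin n) → Fin 3,
        (∀ v, g v = 0 → (Option.elim v (0 : Fin 3) fun _ => 1) = 0) ∧
        ∀ c : Fin 3,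
          (∑ v ∈ Finset.univ.filter fun v => g v = c,
              Option.elim v S fun i => s i) ≤
            ∑ v ∈ Finset.univ.filter fun v => g v = 0,
              Option.elim v S fun i => s i) ↔
      ∃ A : Finset (Fin n), ∑ i ∈ A, s i = S := by
  have hc3 : ∀ c : Fin 3, c = 0 ∨ c = 1 ∨ c = 2 := by decide
  constructor
  · rintro ⟨g, hb, hw⟩
    by_cases hS : S = 0
    · exact ⟨∅, by simp [hS]⟩
    have key : ∀ c : Fin 3,
        (∑ v ∈ Finset.univ.filter fun v => g v = c, Option.elim v S fun i => s i)
        = (if g none = c then S else 0) + ∑ i, if g (some i) = c then s i else 0 := by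
      intro c
      rw [Finset.sum_filter, Fintype.sum_option]
      simp
    have hbs : ∀ i : Fin n, g (some i) ≠ 0 := by
      intro i h
      have := hb (some i) h
      simp at this
    have hb0 : (∑ i, if g (some i) = (0 : Fin 3) then s i else 0) = 0 := by
      apply Finset.sum_eq_zero
      intro i _
      simp [hbs i]
    have htot : (∑ c : Fin 3, ((if g none = c then S else 0)
        + ∑ i, if g (some i) = c then s i else 0)) = 3 * S := by
      rw [Finset.sum_add_distrib]
      rw [Finset.sum_comm]
      have h1 : (∑ c : Fin 3, if g none = c then S else 0) = S := by
        simp [Finset.sum_ite_eq]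
      have h2 : ∀ i : Fin n, (∑ c : Fin 3, if g (some i) = c then s i else 0) = s i := by
        intro i; simp [Finset.sum_ite_eq]
      rw [h1]
      simp only [h2]
      rw [hs]; ring
    rw [Fin.sum_univ_three] at htot
    have hle : ∀ c : Fin 3, ((if g none = c then S else 0)
        + ∑ i, if g (some i) = c then s i else 0)
        ≤ ((if g none = 0 then S else 0) + ∑ i, if g (some i) = (0:Fin 3) then s i else 0) := by
      intro c
      have := hw c
      rwa [key c, key 0] at this
    have h1 := hle 1
    have h2 := hle 2
    have hg0 : g none = 0 := by
      by_contra h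
      have h0 : (if g none = (0:Fin 3) then S else 0) = 0 := if_neg h
      rcases hc3 (g none) with hc | hc | hc
      · exact h hc
      · have e1 : (if g none = (1:Fin 3) then S else 0) = S := if_pos hc
        have e2 : (if g none = (2:Fin 3) then S else 0) = 0 := by rw [hc]; simp
        omega
      · have e1 : (if g none = (1:Fin 3) then S else 0) = 0 := by rw [hc]; simp
        have e2 : (if g none = (2:Fin 3) then S else 0) = S := if_pos hc
        omega
    have e0 : (if g none = (0:Fin 3) then S else 0) = S := if_pos hg0
    have e1 : (if g none = (1:Fin 3) then S else 0) = 0 := by rw [hg0]; simp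
    have e2 : (if g none = (2:Fin 3) then S else 0) = 0 := by rw [hg0]; simp
    have hb1 : (∑ i, if g (some i) = (1:Fin 3) then s i else 0) = S := by omega
    refine ⟨Finset.univ.filter fun i => g (some i) = 1, ?_⟩
    rw [Finset.sum_filter]
    exact hb1
  · rintro ⟨A, hA⟩
    refine ⟨fun v => Option.elim v 0 fun i => if i ∈ A then 1 else 2, ?_, ?_⟩
    · rintro (_ | i) h
      · simp
      · simp only [Option.elim] at h
        split at h <;> simp_all
    · intro c
      have key : ∀ c : Fin 3,
          (∑ v ∈ Finset.univ.filter fun v =>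
              (Option.elim v 0 fun i => if i ∈ A then 1 else 2) = c,
            Option.elim v S fun i => s i)
          = (if (0:Fin 3) = c then S else 0)
            + ∑ i, if (if i ∈ A then (1:Fin 3) else 2) = c then s i else 0 := by
        intro c
        rw [Finset.sum_filter, Fintype.sum_option]
        simp
        rfl
      rw [key c, key 0]
      have h0 : (∑ i, if (if i ∈ A then (1:Fin 3) else 2) = 0 then s i else 0) = 0 := by
        apply Finset.sum_eq_zero
        intro i _
        split <;> simp_all
      rw [h0]
      have h1 : (∑ i, if (if i ∈ A then (1:Fin 3) else 2) = 1 then s i else 0) = S := by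
        rw [← hA, ← Finset.sum_filter]
        congr 1
        ext i
        simp only [Finset.mem_filter, Finset.mem_univ, true_and]
        constructor
        · intro h; by_contra hi; simp [hi] at h
        · intro h; simp [h]
      have h2 : (∑ i, if (if i ∈ A then (1:Fin 3) else 2) = 2 then s i else 0) = S := by
        have hsum : (∑ i, if (if i ∈ A then (1:Fin 3) else 2) = 1 then s i else 0)
            + (∑ i, if (if i ∈ A then (1:Fin 3) else 2) = 2 then s i else 0) = 2 * S := by
          rw [← Finset.sum_add_distrib, ← hs]
          apply Finset.sum_congr rfl
          intro i _
          split <;> simp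
        omega
      have hc : (if (0:Fin 3) = c then S else 0) ≤ S := by split <;> omega
      have e0 : (if (0:Fin 3) = 0 then S else 0) = S := if_pos rfl
      have e1 : (if (0:Fin 3) = 1 then S else 0) = 0 := by simp
      have e2 : (if (0:Fin 3) = 2 then S else 0) = 0 := by simp
      rcases hc3 c with h | h | h <;> subst h
      · omega
      · rw [h1]; omega
      · rw [h2]; omega
end

section
/- Let V and C be finite types, f : V → C, p ∈ C, and k : ℕ. For a vote function h let score_h c = card {v | h v = c}, and say p is a winner under h if ∀ c, score_h c ≤ score_h p. Assume p is not a winner under f, and assume there exists g : V → C with card {v | g v ≠ f v} ≤ k under which p is a winner. Let w be any candidate with ∀ c, score_f c ≤ score_f w, and let v₀ be any voter with f v₀ = w. Then, setting f' = Function.update f v₀ p, there exists g' : V → C with card {u | g' u ≠ f' u} ≤ k − 1 under which p is a winner. -/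
open Function Finset

section

variable {V C : Type*} [Fintype V] [DecidableEq C]

def IsPluralityWinner (g : V → C) (p : C) : Prop := ∀ c, plScore g c ≤ plScore g p

lemma plScore_le_plScore {f g : V → C} {c : C} (h : ∀ v, f v = c → g v = c) :
    plScore f c ≤ plScore g c :=
  card_le_card fun v => by simpa using h v

lemma plScore_lt_plScore {f g : V → C} {c : C} (h : ∀ v, f v = c → g v = c) {u : V}
    (hfu : f u ≠ c) (hgu : g u = c) : plScore f c < plScore g c :=
  card_lt_card <| (ssubset_iff_of_subset fun v => by simpa using h v).2 ⟨u, by simpa, by simpa⟩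

lemma exists_revertible_bribe {f g : V → C} {p w : C} (hg : IsPluralityWinner g p)
    (hf : ¬ IsPluralityWinner f p) (hw : IsPluralityWinner f w) :
    ∃ u, g u ≠ f u ∧ (g u = p → f u ≠ w → plScore g (f u) < plScore g p) := by
  by_contra! h
  obtain ⟨u, hu⟩ : ∃ u, g u ≠ f u := by
    by_contra! hgf
    exact hf (funext hgf ▸ hg)
  obtain ⟨hgu, hfu, hle⟩ := h u hu
  have hlost : plScore g (f u) < plScore f (f u) :=
    plScore_lt_plScore (fun v hv => by by_contra hfv; grind) (hgu ▸ hu) rfl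
  have hkept : plScore f w ≤ plScore g w :=
    plScore_le_plScore fun v hv => by by_contra hgv; grind
  have := hw (f u)
  have := hg w
  omega

variable [DecidableEq V]

lemma plScore_update_add (g : V → C) (a : V) (x c : C) :
    plScore (update g a x) c + (if g a = c then 1 else 0) =
      plScore g c + (if x = c then 1 else 0) := by
  simp only [plScore, card_filter]
  rw [← add_sum_erase _ _ (mem_univ a), ← add_sum_erase _ _ (mem_univ a), update_self,
    sum_congr rfl fun v hv => by rw [update_of_ne (ne_of_mem_erase hv)]]
  ring

namespace IsPluralityWinner

variable {g : V → C} {p : C}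

lemma update_self (hg : IsPluralityWinner g p) (a : V) : IsPluralityWinner (update g a p) p := by
  intro c
  have hc := plScore_update_add g a p c
  have hp := plScore_update_add g a p p
  have := hg c
  grind

lemma update_update (hg : IsPluralityWinner g p) {v₀ u : V} {w y : C} (hv₀ : g v₀ = w)
    (hpw : p ≠ w) (huv₀ : u ≠ v₀) (hu : g u = p → y ≠ w → plScore g y < plScore g p) :
    IsPluralityWinner (update (update g v₀ p) u y) p := by
  intro c
  have hc₀ := plScore_update_add g v₀ p c
  have hc := plScore_update_add (update g v₀ p) u y c
  have hp₀ := plScore_update_add g v₀ p p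
  have hp := plScore_update_add (update g v₀ p) u y p
  rw [update_of_ne huv₀] at hc hp
  have := hg c
  grind

end IsPluralityWinner

lemma filter_update_ne_update (g f : V → C) (a : V) (x : C) :
    ({v | update g a x v ≠ update f a x v} : Finset V) = ({v | g v ≠ f v} : Finset V).erase a := by
  ext v
  rcases eq_or_ne v a with rfl | hv <;> simp [*]

lemma hammingDist_update_update_le (g f : V → C) (a : V) (x : C) :
    hammingDist (update g a x) (update f a x) ≤ hammingDist g f := by
  simp only [hammingDist, filter_update_ne_update]
  exact card_erase_le

lemma hammingDist_update_update_lt {g f : V → C} {a : V} (h : g a ≠ f a) (x : C) :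
    hammingDist (update g a x) (update f a x) < hammingDist g f := by
  simp only [hammingDist, filter_update_ne_update]
  exact card_erase_lt_of_mem (by simpa using h)

lemma hammingDist_update_revert_lt {g f : V → C} {u v₀ : V} (hu : g u ≠ f u) (huv₀ : u ≠ v₀)
    (x : C) : hammingDist (update (update g v₀ x) u (f u)) (update f v₀ x) < hammingDist g f := by
  have hfu : update f v₀ x u = f u := update_of_ne huv₀ _ _
  calc hammingDist (update (update g v₀ x) u (f u)) (update f v₀ x)
      = hammingDist (update (update g v₀ x) u (f u)) (update (update f v₀ x) u (f u)) := by
        rw [(update_eq_self_iff (f := update f v₀ x)).2 hfu.symm]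
    _ < hammingDist (update g v₀ x) (update f v₀ x) :=
        hammingDist_update_update_lt (by rwa [update_of_ne huv₀, hfu]) _
    _ ≤ hammingDist g f := hammingDist_update_update_le g f v₀ x

end

theorem plurality_greedy_exchange_general
    {V C : Type*} [Fintype V] [DecidableEq V] [DecidableEq C]
    (f : V → C) (p : C) (k : ℕ)
    (hnotwin : ¬ ∀ c, plScore f c ≤ plScore f p)
    (hbribe : ∃ g : V → C,
        (Finset.univ.filter fun v => g v ≠ f v).card ≤ k ∧
        ∀ c, plScore g c ≤ plScore g p)
    (w : C) (hw : ∀ c, plScore f c ≤ plScore f w)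
    (v₀ : V) (hv₀ : f v₀ = w) :
    ∃ g' : V → C,
      (Finset.univ.filter fun u => g' u ≠ Function.update f v₀ p u).card ≤ k - 1 ∧
      ∀ c, plScore g' c ≤ plScore g' p := by
  obtain ⟨g, hgk, hg⟩ := hbribe
  change hammingDist g f ≤ k at hgk
  by_cases hgv₀ : g v₀ = f v₀
  · obtain ⟨u, hu, hrev⟩ := exists_revertible_bribe hg hnotwin hw
    have huv₀ : u ≠ v₀ := by rintro rfl; exact hu hgv₀
    have hpw : p ≠ w := by rintro rfl; exact hnotwin hw
    have hdist := (hammingDist_update_revert_lt hu huv₀ p).trans_le hgk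
    exact ⟨update (update g v₀ p) u (f u), Nat.le_sub_one_of_lt hdist,
      IsPluralityWinner.update_update hg (hgv₀.trans hv₀) hpw huv₀ hrev⟩
  · have hdist : hammingDist (update g v₀ p) (update f v₀ p) < k :=
      (hammingDist_update_update_lt hgv₀ p).trans_le hgk
    exact ⟨update g v₀ p, Nat.le_sub_one_of_lt hdist, IsPluralityWinner.update_self hg v₀⟩

/-- Exchange lemma for the greedy plurality-bribery algorithm: if `p` is not yet a
winner but can be made one by at most `k` bribes, then after bribing any voter `v₀`
of any current winner `w` to vote for `p`, at most `k − 1` further bribes suffice. -/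
theorem plurality_greedy_exchange
    {V C : Type*} [Fintype V] [Fintype C] [DecidableEq V] [DecidableEq C]
    (f : V → C) (p : C) (k : ℕ)
    (hnotwin : ¬ ∀ c, plScore f c ≤ plScore f p)
    (hbribe : ∃ g : V → C,
        (Finset.univ.filter fun v => g v ≠ f v).card ≤ k ∧
        ∀ c, plScore g c ≤ plScore g p)
    (w : C) (hw : ∀ c, plScore f c ≤ plScore f w)
    (v₀ : V) (hv₀ : f v₀ = w) :
    ∃ g' : V → C,
      (Finset.univ.filter fun u => g' u ≠ Function.update f v₀ p u).card ≤ k - 1 ∧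
      ∀ c, plScore g' c ≤ plScore g' p :=
  plurality_greedy_exchange_general f p k hnotwin hbribe w hw v₀ hv₀
end

section
/- Let V and C be finite types, f : V → C (f v is the candidate vetoed by voter v), p ∈ C, and k : ℕ. For a veto function h let vetoes_h c = card {v | h v = c}, and say p is a winner under h if ∀ c, vetoes_h p ≤ vetoes_h c. Assume p is not a winner under f, and assume there exists g : V → C with card {v | g v ≠ f v} ≤ k under which p is a winner. Let v₀ be any voter with f v₀ = p, and let c₀ be any candidate with ∀ c, vetoes_f c₀ ≤ vetoes_f c. Then, setting f' = Function.update f v₀ c₀, there exists g' : V → C with card {u | g' u ≠ f' u} ≤ k − 1 under which p is a winner. -/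
/-- The number of vetoes of candidate `c` under veto function `f`. -/
def vetoes {V C : Type*} [Fintype V] [DecidableEq C] (f : V → C) (c : C) : ℕ :=
  (Finset.univ.filter fun v => f v = c).card

open Finset

section helpers
variable {V C : Type*} [Fintype V] [DecidableEq V] [DecidableEq C]

lemma vetoes_update_add (g : V → C) (v : V) (a c : C) :
    vetoes (Function.update g v a) c + (if g v = c then 1 else 0)
      = vetoes g c + (if a = c then 1 else 0) := by
  have hfun : (fun u => if Function.update g v a u = c then (1:ℕ) else 0)
      = Function.update (fun u => if g u = c then (1:ℕ) else 0) v (if a = c then 1 else 0) := by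
    funext u
    by_cases h : u = v
    · subst h; simp
    · simp [Function.update_of_ne h]
  unfold vetoes
  rw [Finset.card_filter, Finset.card_filter, hfun,
      Finset.sum_update_of_mem (Finset.mem_univ v),
      ← Finset.sum_erase_add Finset.univ _ (Finset.mem_univ v),
      Finset.sdiff_singleton_eq_erase]
  omega

lemma cost_update_add (f g : V → C) (v : V) (a : C) :
    (univ.filter fun u => Function.update g v a u ≠ f u).card + (if g v ≠ f v then 1 else 0)
      = (univ.filter fun u => g u ≠ f u).card + (if a ≠ f v then 1 else 0) := by
  have hfun : (fun u => if Function.update g v a u ≠ f u then (1:ℕ) else 0)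
      = Function.update (fun u => if g u ≠ f u then (1:ℕ) else 0) v (if a ≠ f v then 1 else 0) := by
    funext u
    by_cases h : u = v
    · subst h; simp
    · simp [Function.update_of_ne h]
  rw [Finset.card_filter, Finset.card_filter, hfun,
      Finset.sum_update_of_mem (Finset.mem_univ v),
      ← Finset.sum_erase_add Finset.univ _ (Finset.mem_univ v),
      Finset.sdiff_singleton_eq_erase]
  omega

lemma vetoes_comp_equiv (g : V → C) (e : Equiv.Perm V) (c : C) :
    vetoes (fun u => g (e u)) c = vetoes g c := by
  unfold vetoes
  have : (univ.filter fun u => g (e u) = c)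
      = (univ.filter fun u => g u = c).map e.symm.toEmbedding := by
    ext u
    rw [Finset.mem_map_equiv]
    simp
  rw [this, Finset.card_map]

lemma vetoes_le_of_imp (g h : V → C) (c : C) (H : ∀ v, g v = c → h v = c) :
    vetoes g c ≤ vetoes h c := by
  apply Finset.card_le_card
  intro u hu
  simp only [Finset.mem_filter, Finset.mem_univ, true_and] at *
  exact H u hu

end helpers

section main
variable {V C : Type*} [Fintype V] [DecidableEq V] [DecidableEq C]

lemma no_bribe_to_p (f g : V → C) (p : C)
    (hg : ∀ c, vetoes g p ≤ vetoes g c)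
    (hmin : ∀ h : V → C, (∀ c, vetoes h p ≤ vetoes h c) →
      (univ.filter fun v => g v ≠ f v).card ≤ (univ.filter fun v => h v ≠ f v).card)
    (v : V) (hv : g v ≠ f v) : g v ≠ p := by
  intro hgv
  have hfv : f v ≠ p := fun h => hv (hgv.trans h.symm)
  have hsucc : ∀ c, vetoes (Function.update g v (f v)) p ≤ vetoes (Function.update g v (f v)) c := by
    intro c
    by_cases hc : c = p
    · subst hc; exact le_refl _
    · have E1 := vetoes_update_add g v (f v) p
      have E2 := vetoes_update_add g v (f v) c
      rw [if_pos hgv, if_neg hfv] at E1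
      have hgvc : g v ≠ c := by rw [hgv]; exact fun h => hc h.symm
      rw [if_neg hgvc] at E2
      have hle := hg c
      omega
  have h1 := hmin _ hsucc
  have Ec := cost_update_add f g v (f v)
  rw [if_pos hv, if_neg (not_not_intro rfl)] at Ec
  omega

lemma key1 (f g : V → C) (p c₀ : C) (v₀ : V)
    (hv₀ : f v₀ = p) (hc₀p : c₀ ≠ p)
    (hc₀ : ∀ c, vetoes f c₀ ≤ vetoes f c)
    (hg : ∀ c, vetoes g p ≤ vetoes g c)
    (hmin : ∀ h : V → C, (∀ c, vetoes h p ≤ vetoes h c) →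
      (univ.filter fun v => g v ≠ f v).card ≤ (univ.filter fun v => h v ≠ f v).card)
    (hne : g v₀ ≠ p) :
    ∃ g₂ : V → C, g₂ v₀ = c₀ ∧ (∀ c, vetoes g₂ p ≤ vetoes g₂ c) ∧
      (univ.filter fun v => g₂ v ≠ f v).card ≤ (univ.filter fun v => g v ≠ f v).card := by
  by_cases hdc : g v₀ = c₀
  · exact ⟨g, hdc, hg, le_refl _⟩
  by_cases htight : vetoes g p < vetoes g (g v₀)
  · -- retarget v₀'s bribe to c₀
    refine ⟨Function.update g v₀ c₀, Function.update_self _ _ _, ?_, ?_⟩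
    · intro c
      by_cases hc : c = p
      · subst hc; exact le_refl _
      have E1 := vetoes_update_add g v₀ c₀ c
      have E1p := vetoes_update_add g v₀ c₀ p
      rw [if_neg hne, if_neg hc₀p] at E1p
      have hgc := hg c
      by_cases hcd : g v₀ = c
      · rw [if_pos hcd] at E1
        rw [hcd] at htight
        omega
      · rw [if_neg hcd] at E1
        omega
    · have F := cost_update_add f g v₀ c₀
      rw [hv₀] at F
      rw [if_pos hne, if_pos hc₀p] at F
      omega
  push_neg at htight
  by_cases hswap : ∃ v₁, g v₁ = c₀ ∧ f v₁ ≠ c₀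
  · -- swap bribe targets of v₀ and v₁
    obtain ⟨v₁, hv₁, hfv₁⟩ := hswap
    refine ⟨fun u => g (Equiv.swap v₀ v₁ u), ?_, ?_, ?_⟩
    · show g (Equiv.swap v₀ v₁ v₀) = c₀
      rw [Equiv.swap_apply_left]; exact hv₁
    · intro c; rw [vetoes_comp_equiv, vetoes_comp_equiv]; exact hg c
    · apply Finset.card_le_card
      intro u hu
      simp only [mem_filter, mem_univ, true_and] at hu ⊢
      by_cases h0 : u = v₀
      · subst h0; rw [hv₀]; exact hne
      by_cases h1 : u = v₁
      · subst h1; exact fun h => hfv₁ (h.symm.trans hv₁)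
      · rw [Equiv.swap_apply_of_ne_of_ne h0 h1] at hu; exact hu
  · -- impossible: g was not minimal
    exfalso
    push_neg at hswap
    have hA : vetoes g c₀ ≤ vetoes f c₀ := vetoes_le_of_imp g f c₀ hswap
    have hB : vetoes g (g v₀) ≤ vetoes f (g v₀) := by
      have h1 := hg c₀
      have h2 := hc₀ (g v₀)
      omega
    have hex : ∃ v₂, f v₂ = g v₀ ∧ g v₂ ≠ g v₀ := by
      by_contra hno
      push_neg at hno
      have hsub : insert v₀ (univ.filter fun v => f v = g v₀) ⊆ (univ.filter fun v => g v = g v₀) := by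
        intro u hu
        simp only [mem_insert, mem_filter, mem_univ, true_and] at hu ⊢
        rcases hu with h | h
        · subst h; rfl
        · exact hno u h
      have hv₀notin : v₀ ∉ (univ.filter fun v => f v = g v₀) := by
        simp only [mem_filter, mem_univ, true_and, hv₀]
        exact fun h => hne h.symm
      have hle := Finset.card_le_card hsub
      rw [Finset.card_insert_of_notMem hv₀notin] at hle
      unfold vetoes at hB
      omega
    obtain ⟨v₂, hfv₂, hgv₂⟩ := hex
    have hv₂v₀ : v₂ ≠ v₀ := by
      intro h
      rw [h, hv₀] at hfv₂
      exact hne hfv₂.symm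
    have hgv₂f : g v₂ ≠ f v₂ := by rw [hfv₂]; exact hgv₂
    have hsucc : ∀ c, vetoes (fun u => g (Equiv.swap v₀ v₂ u)) p
        ≤ vetoes (fun u => g (Equiv.swap v₀ v₂ u)) c := by
      intro c; rw [vetoes_comp_equiv, vetoes_comp_equiv]; exact hg c
    have hcost : (univ.filter fun u => g (Equiv.swap v₀ v₂ u) ≠ f u)
        ⊆ (univ.filter fun u => g u ≠ f u).erase v₂ := by
      intro u hu
      simp only [mem_filter, mem_univ, true_and, mem_erase] at hu ⊢
      by_cases h0 : u = v₀
      · subst h0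
        refine ⟨Ne.symm hv₂v₀, ?_⟩
        rw [hv₀]; exact hne
      by_cases h2 : u = v₂
      · subst h2
        exfalso; apply hu
        rw [Equiv.swap_apply_right]
        exact hfv₂.symm
      · rw [Equiv.swap_apply_of_ne_of_ne h0 h2] at hu
        exact ⟨h2, hu⟩
    have hv₂mem : v₂ ∈ (univ.filter fun u => g u ≠ f u) := by
      simp only [mem_filter, mem_univ, true_and]; exact hgv₂f
    have h1 := Finset.card_le_card hcost
    rw [Finset.card_erase_of_mem hv₂mem] at h1
    have h2 := hmin _ hsucc
    have h3 : 0 < (univ.filter fun u => g u ≠ f u).card :=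
      Finset.card_pos.2 ⟨v₂, hv₂mem⟩
    omega

end main

section main2
variable {V C : Type*} [Fintype V] [DecidableEq V] [DecidableEq C]

lemma key2 (f g : V → C) (p c₀ : C) (v₀ : V)
    (hv₀ : f v₀ = p) (hc₀p : c₀ ≠ p)
    (hfp : vetoes f c₀ < vetoes f p)
    (hg : ∀ c, vetoes g p ≤ vetoes g c)
    (hall : ∀ v, f v = p → g v = p) :
    ∃ g₂ : V → C, g₂ v₀ = c₀ ∧ (∀ c, vetoes g₂ p ≤ vetoes g₂ c) ∧
      (univ.filter fun v => g₂ v ≠ f v).card ≤ (univ.filter fun v => g v ≠ f v).card := by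
  have h1 : vetoes f p ≤ vetoes g p := vetoes_le_of_imp f g p hall
  have h2 : vetoes f c₀ < vetoes g c₀ := lt_of_lt_of_le hfp (h1.trans (hg c₀))
  have hex : ∃ v₁, g v₁ = c₀ ∧ f v₁ ≠ c₀ := by
    by_contra hno
    push_neg at hno
    have := vetoes_le_of_imp g f c₀ hno
    omega
  obtain ⟨v₁, hv₁, hfv₁⟩ := hex
  have hfv₁p : f v₁ ≠ p := fun h => hc₀p (hv₁.symm.trans (hall v₁ h))
  have hv₁v₀ : v₁ ≠ v₀ := fun h => hfv₁p (by rw [h]; exact hv₀)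
  have hgv₁f : g v₁ ≠ f v₁ := fun h => hfv₁ (h.symm.trans hv₁)
  have hup : Function.update g v₁ (f v₁) v₀ = p := by
    rw [Function.update_of_ne (Ne.symm hv₁v₀)]
    exact hall v₀ hv₀
  refine ⟨Function.update (Function.update g v₁ (f v₁)) v₀ c₀,
    Function.update_self _ _ _, ?_, ?_⟩
  · intro c
    by_cases hc : c = p
    · subst hc; exact le_refl _
    have E1c := vetoes_update_add g v₁ (f v₁) c
    have E2c := vetoes_update_add (Function.update g v₁ (f v₁)) v₀ c₀ c
    have E1p := vetoes_update_add g v₁ (f v₁) p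
    have E2p := vetoes_update_add (Function.update g v₁ (f v₁)) v₀ c₀ p
    rw [hup] at E2c E2p
    rw [hv₁] at E1c E1p
    rw [if_neg hc₀p, if_neg hfv₁p] at E1p
    rw [if_pos rfl, if_neg hc₀p] at E2p
    rw [if_neg (fun h : p = c => hc h.symm)] at E2c
    have hgc := hg c
    omega
  · have F1 := cost_update_add f g v₁ (f v₁)
    have F2 := cost_update_add f (Function.update g v₁ (f v₁)) v₀ c₀
    rw [hup, hv₀] at F2
    rw [if_neg (not_not_intro rfl), if_pos (show c₀ ≠ p from hc₀p)] at F2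
    rw [if_pos hgv₁f, if_neg (not_not_intro rfl)] at F1
    omega

lemma key (f g : V → C) (p c₀ : C) (v₀ : V)
    (hnotwin : ¬ ∀ c, vetoes f p ≤ vetoes f c)
    (hv₀ : f v₀ = p)
    (hc₀ : ∀ c, vetoes f c₀ ≤ vetoes f c)
    (hg : ∀ c, vetoes g p ≤ vetoes g c)
    (hmin : ∀ h : V → C, (∀ c, vetoes h p ≤ vetoes h c) →
      (univ.filter fun v => g v ≠ f v).card ≤ (univ.filter fun v => h v ≠ f v).card) :
    ∃ g₂ : V → C, g₂ v₀ = c₀ ∧ (∀ c, vetoes g₂ p ≤ vetoes g₂ c) ∧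
      (univ.filter fun v => g₂ v ≠ f v).card ≤ (univ.filter fun v => g v ≠ f v).card := by
  obtain ⟨c, hc⟩ : ∃ c, vetoes f c < vetoes f p := by push_neg at hnotwin; exact hnotwin
  have hfp : vetoes f c₀ < vetoes f p := lt_of_le_of_lt (hc₀ c) hc
  have hc₀p : c₀ ≠ p := by intro h; rw [h] at hfp; omega
  by_cases hA : g v₀ = p
  · by_cases hB : ∀ v, f v = p → g v = p
    · exact key2 f g p c₀ v₀ hv₀ hc₀p hfp hg hB
    · push_neg at hB
      obtain ⟨v₁, hfv₁, hgv₁⟩ := hB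
      have hv₁v₀ : v₁ ≠ v₀ := fun h => hgv₁ (by rw [h]; exact hA)
      have hg'succ : ∀ c, vetoes (fun u => g (Equiv.swap v₀ v₁ u)) p
          ≤ vetoes (fun u => g (Equiv.swap v₀ v₁ u)) c := by
        intro c; rw [vetoes_comp_equiv, vetoes_comp_equiv]; exact hg c
      have hg'v₀ : (fun u => g (Equiv.swap v₀ v₁ u)) v₀ = g v₁ := by
        show g (Equiv.swap v₀ v₁ v₀) = g v₁
        rw [Equiv.swap_apply_left]
      have hv₁mem : v₁ ∈ (univ.filter fun u => g u ≠ f u) := by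
        simp only [mem_filter, mem_univ, true_and]
        rw [hfv₁]; exact hgv₁
      have hsub : (univ.filter fun u => g (Equiv.swap v₀ v₁ u) ≠ f u)
          ⊆ insert v₀ ((univ.filter fun u => g u ≠ f u).erase v₁) := by
        intro u hu
        simp only [mem_filter, mem_univ, true_and, mem_insert, mem_erase] at hu ⊢
        by_cases h0 : u = v₀
        · left; exact h0
        right
        by_cases h1 : u = v₁
        · subst h1
          exfalso; apply hu
          rw [Equiv.swap_apply_right, hA, hfv₁]
        · rw [Equiv.swap_apply_of_ne_of_ne h0 h1] at hu
          exact ⟨h1, hu⟩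
      have hcard2 : (univ.filter fun u => g (Equiv.swap v₀ v₁ u) ≠ f u).card
          ≤ (univ.filter fun u => g u ≠ f u).card := by
        have ha := Finset.card_le_card hsub
        have hb := Finset.card_insert_le v₀ ((univ.filter fun u => g u ≠ f u).erase v₁)
        rw [Finset.card_erase_of_mem hv₁mem] at hb
        have h3 : 0 < (univ.filter fun u => g u ≠ f u).card :=
          Finset.card_pos.2 ⟨v₁, hv₁mem⟩
        omega
      have hg'min : ∀ h : V → C, (∀ c, vetoes h p ≤ vetoes h c) →
          (univ.filter fun v => (fun u => g (Equiv.swap v₀ v₁ u)) v ≠ f v).card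
            ≤ (univ.filter fun v => h v ≠ f v).card := by
        intro h hh
        exact le_trans hcard2 (hmin h hh)
      obtain ⟨g₂, hh1, hh2, hh3⟩ := key1 f (fun u => g (Equiv.swap v₀ v₁ u)) p c₀ v₀
        hv₀ hc₀p hc₀ hg'succ hg'min (by rw [show g (Equiv.swap v₀ v₁ v₀) = g v₁ from hg'v₀]; exact hgv₁)
      exact ⟨g₂, hh1, hh2, le_trans hh3 hcard2⟩
  · exact key1 f g p c₀ v₀ hv₀ hc₀p hc₀ hg hmin hA

end main2


/-- Exchange lemma for the greedy veto-bribery algorithm: if `p` is not yet a winner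
but can be made one by at most `k` bribes, then after rebribing any vetoer `v₀` of `p`
to veto any candidate `c₀` with the fewest vetoes, at most `k − 1` further bribes
suffice. -/
theorem veto_greedy_exchange
    {V C : Type*} [Fintype V] [Fintype C] [DecidableEq V] [DecidableEq C]
    (f : V → C) (p : C) (k : ℕ)
    (hnotwin : ¬ ∀ c, vetoes f p ≤ vetoes f c)
    (hbribe : ∃ g : V → C,
        (Finset.univ.filter fun v => g v ≠ f v).card ≤ k ∧
        ∀ c, vetoes g p ≤ vetoes g c)
    (v₀ : V) (hv₀ : f v₀ = p)
    (c₀ : C) (hc₀ : ∀ c, vetoes f c₀ ≤ vetoes f c) :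
    ∃ g' : V → C,
      (Finset.univ.filter fun u => g' u ≠ Function.update f v₀ c₀ u).card ≤ k - 1 ∧
      ∀ c, vetoes g' p ≤ vetoes g' c := by
  obtain ⟨g₀, hg₀k, hg₀succ⟩ := hbribe
  have hS : (univ.filter fun h : V → C => ∀ c, vetoes h p ≤ vetoes h c).Nonempty :=
    ⟨g₀, by simp only [mem_filter, mem_univ, true_and]; exact hg₀succ⟩
  obtain ⟨g, hgmem, hgmin'⟩ :=
    Finset.exists_min_image _ (fun h : V → C => (univ.filter fun v => h v ≠ f v).card) hS
  simp only [mem_filter, mem_univ, true_and] at hgmem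
  have hmin : ∀ h : V → C, (∀ c, vetoes h p ≤ vetoes h c) →
      (univ.filter fun v => g v ≠ f v).card ≤ (univ.filter fun v => h v ≠ f v).card := by
    intro h hh
    exact hgmin' h (by simp only [mem_filter, mem_univ, true_and]; exact hh)
  obtain ⟨g₂, hg₂v₀, hg₂succ, hg₂cost⟩ := key f g p c₀ v₀ hnotwin hv₀ hc₀ hgmem hmin
  have hmk : (univ.filter fun v => g v ≠ f v).card ≤ k :=
    le_trans (hmin g₀ hg₀succ) hg₀k
  have hc₀p : c₀ ≠ p := by
    obtain ⟨c, hc⟩ : ∃ c, vetoes f c < vetoes f p := by push_neg at hnotwin; exact hnotwin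
    have := hc₀ c
    intro h; rw [h] at this; omega
  refine ⟨g₂, ?_, hg₂succ⟩
  have hv₀mem : v₀ ∈ (univ.filter fun u => g₂ u ≠ f u) := by
    simp only [mem_filter, mem_univ, true_and]
    rw [hv₀, hg₂v₀]; exact hc₀p
  have heq : (univ.filter fun u => g₂ u ≠ Function.update f v₀ c₀ u)
      = (univ.filter fun u => g₂ u ≠ f u).erase v₀ := by
    ext u
    simp only [mem_filter, mem_univ, true_and, mem_erase]
    by_cases h0 : u = v₀
    · subst h0
      simp [Function.update_self, hg₂v₀]
    · rw [Function.update_of_ne h0]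
      exact ⟨fun h => ⟨h0, h⟩, fun h => h.2⟩
  rw [heq, Finset.card_erase_of_mem hv₀mem]
  have hpos : 0 < (univ.filter fun u => g₂ u ≠ f u).card :=
    Finset.card_pos.2 ⟨v₀, hv₀mem⟩
  omega
end

section
/- Let m ≥ 1 and let α : Fin m → ℕ be nonincreasing (i ≤ j → α j ≤ α i) with α (m−1) = 0. Let p ∈ Fin m. Let V₀ and V₁ be finite types of voters with weights ω on V₀ ⊕ V₁, let σ be a profile of rankings on V₀ ⊕ V₁ such that every voter v ∈ V₁ ranks p last (σ_v p = m−1), and suppose ω v₁ ≥ 2 · ω v₀ for every v₁ ∈ V₁ and every v₀ ∈ V₀. If there exists a profile τ on V₀ ⊕ V₁ with card {v | τ v ≠ σ v} ≤ card V₁ under which p is a winner, then there exists a profile τ' with τ' v = σ v for every v ∈ V₀ under which p is a winner. -/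
/-!
Keep the light voters' votes, keep the bribed heavy votes, and in every unbribed heavy vote move
`p` from last to first place. For a rival `c`, compare the new election with the winning bribery
`τ`: light voters that `τ` bribed can only help `c` against `p` by at most `2 ω · α 0` each, while
each unbribed heavy voter now gives `p` an extra `ω · α 0` and gives `c` no more than before.
Since at most `|V₁|` voters were bribed, the bribed light voters are no more numerous than the
unbribed heavy ones, and each of the latter outweighs twice any of the former.
-/

open Finset

theorem Finset.sum_le_sum_of_card_le_of_forall_le {ι κ M : Type*} [AddCommMonoid M]
    [LinearOrder M] [IsOrderedAddMonoid M] [CanonicallyOrderedAdd M] {s : Finset ι}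
    {t : Finset κ} {f : ι → M} {g : κ → M} (hst : #s ≤ #t)
    (hfg : ∀ x ∈ s, ∀ y ∈ t, f x ≤ g y) :
    ∑ x ∈ s, f x ≤ ∑ y ∈ t, g y := by
  obtain rfl | ht := t.eq_empty_or_nonempty
  · simp [card_eq_zero.mp (Nat.le_zero.mp hst)]
  obtain ⟨y₀, hy₀, hmin⟩ := t.exists_min_image g ht
  calc ∑ x ∈ s, f x ≤ #s • g y₀ := sum_le_card_nsmul _ _ _ fun x hx => hfg x hx y₀ hy₀
    _ ≤ #t • g y₀ := nsmul_le_nsmul_left zero_le hst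
    _ ≤ ∑ y ∈ t, g y := card_nsmul_le_sum _ _ _ hmin

theorem card_filter_inl_ne_le_card_filter_inr_eq {α β γ : Type*} [Fintype α] [Fintype β]
    [DecidableEq γ] {f g : α ⊕ β → γ} (h : {v | f v ≠ g v}.ncard ≤ Fintype.card β) :
    #{u | f (Sum.inl u) ≠ g (Sum.inl u)} ≤ #{v | f (Sum.inr v) = g (Sum.inr v)} := by
  have hsplit : {v | f v ≠ g v}.ncard =
      #{u | f (Sum.inl u) ≠ g (Sum.inl u)} + #{v | f (Sum.inr v) ≠ g (Sum.inr v)} := by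
    rw [Set.ncard_eq_toFinset_card', Set.toFinset_ofPred, card_filter, card_filter, card_filter,
      Fintype.sum_sum_type]
  have hβ : #{v | f (Sum.inr v) = g (Sum.inr v)} + #{v | f (Sum.inr v) ≠ g (Sum.inr v)} =
      Fintype.card β :=
    card_filter_add_card_filter_not _
  omega

theorem Antitone.apply_finRotate_le {n : ℕ} {α : Fin (n + 1) → ℕ} (hα : Antitone α)
    {i : Fin (n + 1)} (hi : i ≠ Fin.last n) : α (finRotate (n + 1) i) ≤ α i := by
  refine hα ?_
  rw [finRotate_apply, Fin.le_def, Fin.val_add_one_of_lt (Fin.lt_last_iff_ne_last.mpr hi)]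
  omega

section WeightedScores

variable {W : Type*} [Fintype W] (ω : W → ℕ)

theorem sum_add_le_add_sum_changed_mul {m : ℕ} {α : Fin m → ℕ} {M : ℕ} (hM : ∀ i, α i ≤ M)
    (σ τ : W → Fin m ≃ Fin m) (c p : Fin m) :
    ∑ u, (ω u * α (σ u c) + ω u * α (τ u p)) ≤
      ∑ u, (ω u * α (σ u p) + ω u * α (τ u c)) + (∑ u with τ u ≠ σ u, 2 * ω u) * M := by
  rw [sum_mul, sum_filter, ← sum_add_distrib]
  refine sum_le_sum fun u _ => ?_
  by_cases h : τ u = σ u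
  · simp only [h, ne_eq, not_true_eq_false, if_false]
    omega
  · simp only [h, ne_eq, not_false_eq_true, if_true]
    have := Nat.mul_le_mul_left (ω u) (hM (σ u c))
    have := Nat.mul_le_mul_left (ω u) (hM (τ u p))
    have : 2 * ω u * M = ω u * M + ω u * M := by ring
    omega

variable {n : ℕ}

/-- On a vote ranking `p` last, composing with `finRotate` moves `p` to the top and every other
candidate down one place. -/
def promoteUnbribed (σ τ : W → Fin (n + 1) ≃ Fin (n + 1)) (v : W) : Fin (n + 1) ≃ Fin (n + 1) :=
  if τ v = σ v then (σ v).trans (finRotate (n + 1)) else τ v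

theorem sum_promoteUnbribed_add_le {α : Fin (n + 1) → ℕ} (hα : Antitone α)
    (hlast : α (Fin.last n) = 0) {σ : W → Fin (n + 1) ≃ Fin (n + 1)} {p : Fin (n + 1)}
    (hσ : ∀ v, σ v p = Fin.last n) (τ : W → Fin (n + 1) ≃ Fin (n + 1)) {c : Fin (n + 1)}
    (hcp : c ≠ p) :
    ∑ v, (ω v * α (promoteUnbribed σ τ v c) + ω v * α (τ v p)) + (∑ v with τ v = σ v, ω v) * α 0
      ≤ ∑ v, (ω v * α (promoteUnbribed σ τ v p) + ω v * α (τ v c)) := by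
  rw [sum_mul, sum_filter, ← sum_add_distrib]
  refine sum_le_sum fun v _ => ?_
  by_cases h : τ v = σ v
  · have hc : σ v c ≠ Fin.last n := hσ v ▸ (σ v).injective.ne hcp
    have := Nat.mul_le_mul_left (ω v) (hα.apply_finRotate_le hc)
    simp only [promoteUnbribed, h, if_true, Equiv.trans_apply, hσ, finRotate_last, hlast]
    omega
  · simp only [promoteUnbribed, h, if_false]
    omega

end WeightedScores

/-- Key claim of the reduction from restricted weighted manipulation to weighted
bribery for scoring protocols: if the voters in `V₁` all rank `p` last and each is at
least twice as heavy as every voter in `V₀`, and some bribery of at most `‖V₁‖` voters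
makes `p` a winner, then some bribery touching only the voters in `V₁` does. -/
theorem scoring_bribery_heavy_voters_suffice
    (m : ℕ) (hm : 1 ≤ m) (α : Fin m → ℕ)
    (hα : ∀ i j : Fin m, i ≤ j → α j ≤ α i)
    (hlast : α ⟨m - 1, Nat.sub_lt hm Nat.one_pos⟩ = 0)
    (p : Fin m) {V₀ V₁ : Type*} [Fintype V₀] [Fintype V₁]
    (ω : V₀ ⊕ V₁ → ℕ) (σ : V₀ ⊕ V₁ → (Fin m ≃ Fin m))
    (hσ : ∀ v : V₁, σ (Sum.inr v) p = ⟨m - 1, Nat.sub_lt hm Nat.one_pos⟩)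
    (hω : ∀ (v₁ : V₁) (v₀ : V₀), 2 * ω (Sum.inl v₀) ≤ ω (Sum.inr v₁))
    (hex : ∃ τ : V₀ ⊕ V₁ → (Fin m ≃ Fin m),
        {v | τ v ≠ σ v}.ncard ≤ Fintype.card V₁ ∧
        ∀ c : Fin m, (∑ v, ω v * α (τ v c)) ≤ ∑ v, ω v * α (τ v p)) :
    ∃ τ' : V₀ ⊕ V₁ → (Fin m ≃ Fin m),
      (∀ v : V₀, τ' (Sum.inl v) = σ (Sum.inl v)) ∧
      ∀ c : Fin m, (∑ v, ω v * α (τ' v c)) ≤ ∑ v, ω v * α (τ' v p) := by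
  obtain ⟨n, rfl⟩ : ∃ n, m = n + 1 := ⟨m - 1, by omega⟩
  obtain ⟨τ, hcard, hwin⟩ := hex
  refine ⟨Sum.elim (σ ∘ Sum.inl) (promoteUnbribed (σ ∘ Sum.inr) (τ ∘ Sum.inr)), fun _ => rfl,
    fun c => ?_⟩
  rcases eq_or_ne c p with rfl | hcp
  · exact le_rfl
  have light := sum_add_le_add_sum_changed_mul (ω ∘ Sum.inl) (fun i => hα 0 i (Fin.zero_le i))
    (σ ∘ Sum.inl) (τ ∘ Sum.inl) c p
  have heavy := sum_promoteUnbribed_add_le (ω ∘ Sum.inr) hα hlast (σ := σ ∘ Sum.inr) hσ (τ ∘ Sum.inr) hcp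
  have transfer := Nat.mul_le_mul_right (α 0) <|
    sum_le_sum_of_card_le_of_forall_le (card_filter_inl_ne_le_card_filter_inr_eq hcard)
      fun u _ v _ => hω v u
  have hτ := hwin c
  simp only [Fintype.sum_sum_type, sum_add_distrib, Sum.elim_inl, Sum.elim_inr,
    Function.comp_apply] at light heavy transfer hτ ⊢
  omega
end

section
/- Let m ≥ 1, let α : Fin m → ℕ be nonincreasing (i ≤ j → α j ≤ α i) with α (m−1) = 0, let V be a finite type with weights ω : V → ℕ, let p ∈ Fin m, and let σ be a profile of rankings with σ_{v₀} p = m−1 for some voter v₀. Let τ be the profile that agrees with σ on every voter except v₀, where τ_{v₀} p = 0 and for every candidate c ≠ p, τ_{v₀} c = σ_{v₀} c + 1. Then for every candidate c ≠ p, ((score_τ p : ℤ) − score_τ c) − ((score_σ p : ℤ) − score_σ c) ≥ α 0 · ω v₀, where score_h d = ∑_v ω v · α (h_v d). -/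
/-! Only the bribed voter `v₀` changes, so each score difference is `ω v₀` times the change in
`v₀`'s points: `p` climbs from the last position (worth `0`) to the first (worth `α 0`), while
any other candidate `c` drops one position and, `α` being nonincreasing, cannot gain points. -/

theorem Fintype.sum_sub_sum_eq_sub_of_eq_off {ι β : Type*} [Fintype ι] [AddCommGroup β]
    {f g : ι → β} (a : ι) (h : ∀ i ≠ a, f i = g i) :
    ∑ i, f i - ∑ i, g i = f a - g a := by
  rw [← Finset.sum_sub_distrib]
  exact Fintype.sum_eq_single a fun i hi => sub_eq_zero.mpr (h i hi)

/-- The promotion bound: bribing a voter `v₀` who ranks `p` last to rank `p` first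
(shifting every other candidate back one position) gains `p` an advantage of at least
`α 0 · ω v₀` over every other candidate in a weighted scoring election. -/
theorem scoring_promotion_bound
    (m : ℕ) (hm : 1 ≤ m) (α : Fin m → ℕ)
    (hα : ∀ i j : Fin m, i ≤ j → α j ≤ α i)
    (hlast : α ⟨m - 1, Nat.sub_lt hm Nat.one_pos⟩ = 0)
    {V : Type*} [Fintype V] (ω : V → ℕ) (p : Fin m)
    (σ τ : V → (Fin m ≃ Fin m)) (v₀ : V)
    (hp : σ v₀ p = ⟨m - 1, Nat.sub_lt hm Nat.one_pos⟩)
    (hagree : ∀ v, v ≠ v₀ → τ v = σ v)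
    (htop : τ v₀ p = ⟨0, hm⟩)
    (hshift : ∀ c : Fin m, c ≠ p → ((τ v₀ c : ℕ) = (σ v₀ c : ℕ) + 1)) :
    ∀ c : Fin m, c ≠ p →
      (α ⟨0, hm⟩ : ℤ) * (ω v₀ : ℤ) ≤
        (((∑ v, ω v * α (τ v p) : ℕ) : ℤ) - ((∑ v, ω v * α (τ v c) : ℕ) : ℤ)) -
          (((∑ v, ω v * α (σ v p) : ℕ) : ℤ) - ((∑ v, ω v * α (σ v c) : ℕ) : ℤ)) := by
  intro c hc
  have hgain (d : Fin m) :
      ∑ v, (ω v : ℤ) * α (τ v d) - ∑ v, (ω v : ℤ) * α (σ v d) =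
        ω v₀ * α (τ v₀ d) - ω v₀ * α (σ v₀ d) :=
    Fintype.sum_sub_sum_eq_sub_of_eq_off v₀ fun v hv => by rw [hagree v hv]
  have hdemote : (α (τ v₀ c) : ℤ) ≤ α (σ v₀ c) := by
    exact_mod_cast hα _ _ (by rw [Fin.le_def, hshift c hc]; omega)
  have hloss := mul_le_mul_of_nonneg_left hdemote (Int.natCast_nonneg (ω v₀))
  push_cast
  rw [sub_sub_sub_comm, hgain, hgain, hp, htop, hlast, Nat.cast_zero]
  linarith
end

section
/- Let m ≥ 1, let V be a nonempty finite type of voters, and let σ : V → (Fin m ≃ Fin m) be a profile of rankings. Call a candidate c a Condorcet winner of a profile h if for every candidate d ≠ c, card {v | h_v c < h_v d} > card {v | h_v d < h_v c}. Define the Dodgson′ score of a candidate c under σ as the least k ∈ ℕ such that there exists a profile τ with card {v | τ v ≠ σ v} ≤ k of which c is a Condorcet winner. If c is a Condorcet winner of σ, then the Dodgson′ score of c equals 0, and the Dodgson′ score of every candidate d ≠ c is at least 1; in particular, c is the unique candidate of minimal Dodgson′ score. -/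
/-- `c` is a Condorcet winner of the profile `h`: for every other candidate `d`, more
voters prefer `c` to `d` (rank `c` at a smaller position) than prefer `d` to `c`. -/
def IsCondorcetWinner {m : ℕ} {V : Type*} [Fintype V]
    (h : V → (Fin m ≃ Fin m)) (c : Fin m) : Prop :=
  ∀ d : Fin m, d ≠ c → {v | h v d < h v c}.ncard < {v | h v c < h v d}.ncard

/-- The Dodgson′ score of `c` under the profile `σ`: the least number of voters whose
entire vote must be replaced to make `c` a Condorcet winner. -/
noncomputable def dodgson'Score {m : ℕ} {V : Type*} [Fintype V]
    (σ : V → (Fin m ≃ Fin m)) (c : Fin m) : ℕ :=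
  sInf {k : ℕ | ∃ τ : V → (Fin m ≃ Fin m),
    {v | τ v ≠ σ v}.ncard ≤ k ∧ IsCondorcetWinner τ c}


namespace IsCondorcetWinner

variable {m : ℕ} {V : Type*} [Fintype V] {h : V → (Fin m ≃ Fin m)}

theorem eq {c d : Fin m} (hd : IsCondorcetWinner h d) (hc : IsCondorcetWinner h c) :
    d = c := by
  by_contra hdc
  exact lt_asymm (hc d hdc) (hd c (Ne.symm hdc))

theorem of_forall_lt [Nonempty V] {c : Fin m} (hfirst : ∀ v d, d ≠ c → h v c < h v d) :
    IsCondorcetWinner h c := by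
  intro d hd
  have hnone : {v | h v d < h v c} = ∅ :=
    Set.eq_empty_of_forall_notMem fun v hv => lt_asymm hv (hfirst v d hd)
  have hall : {v | h v c < h v d} = Set.univ := Set.eq_univ_of_forall fun v => hfirst v d hd
  rw [hnone, hall, Set.ncard_empty, Set.ncard_univ]
  exact Nat.card_pos

end IsCondorcetWinner

theorem exists_isCondorcetWinner {m : ℕ} (V : Type*) [Fintype V] [Nonempty V] (c : Fin m) :
    ∃ τ : V → (Fin m ≃ Fin m), IsCondorcetWinner τ c := by
  let first : Fin m := ⟨0, c.pos⟩
  refine ⟨fun _ => Equiv.swap c first, IsCondorcetWinner.of_forall_lt fun _ d hd => ?_⟩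
  have hne : Equiv.swap c first d ≠ Equiv.swap c first c := (Equiv.swap c first).injective.ne hd
  rw [Equiv.swap_apply_left] at hne ⊢
  exact Fin.lt_def.mpr (Nat.pos_of_ne_zero fun h0 => hne (Fin.ext h0))

theorem ncard_setOf_ne_le_zero_iff {V α : Type*} [Finite V] {τ σ : V → α} :
    {v | τ v ≠ σ v}.ncard ≤ 0 ↔ τ = σ := by
  rw [Nat.le_zero, Set.ncard_eq_zero, Set.eq_empty_iff_forall_notMem, funext_iff]
  simp only [Set.mem_ofPred_eq, not_not]

theorem dodgson'Score_eq_zero_iff {m : ℕ} {V : Type*} [Fintype V] [Nonempty V]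
    (σ : V → (Fin m ≃ Fin m)) (c : Fin m) :
    dodgson'Score σ c = 0 ↔ IsCondorcetWinner σ c := by
  -- `sInf ∅ = 0`, so the junk value must be excluded by exhibiting some profile.
  obtain ⟨τ, hτ⟩ := exists_isCondorcetWinner V c
  have hnonempty : {k : ℕ | ∃ τ : V → (Fin m ≃ Fin m),
      {v | τ v ≠ σ v}.ncard ≤ k ∧ IsCondorcetWinner τ c} ≠ ∅ :=
    Set.nonempty_iff_ne_empty.mp ⟨_, τ, le_rfl, hτ⟩
  rw [dodgson'Score, Nat.sInf_eq_zero, or_iff_left hnonempty, Set.mem_ofPred_eq]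
  simp only [ncard_setOf_ne_le_zero_iff, exists_eq_left]

theorem dodgson'_elects_condorcet_winner_general
    (m : ℕ) {V : Type*} [Fintype V] [Nonempty V]
    (σ : V → (Fin m ≃ Fin m)) (c : Fin m) (hc : IsCondorcetWinner σ c) :
    dodgson'Score σ c = 0 ∧
    (∀ d : Fin m, d ≠ c → 1 ≤ dodgson'Score σ d) ∧
    (∀ d : Fin m, (∀ e : Fin m, dodgson'Score σ d ≤ dodgson'Score σ e) → d = c) := by
  have hpos (d : Fin m) (hd : d ≠ c) : 1 ≤ dodgson'Score σ d :=
    Nat.one_le_iff_ne_zero.mpr fun h0 => hd (((dodgson'Score_eq_zero_iff σ d).mp h0).eq hc)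
  have hzero : dodgson'Score σ c = 0 := (dodgson'Score_eq_zero_iff σ c).mpr hc
  refine ⟨hzero, hpos, fun d hmin => ?_⟩
  exact ((dodgson'Score_eq_zero_iff σ d).mp (Nat.le_zero.mp (hzero ▸ hmin c))).eq hc

/-- Dodgson′ elects the Condorcet winner whenever one exists: a Condorcet winner `c`
has Dodgson′ score `0`, every other candidate has Dodgson′ score at least `1`, and so
`c` is the unique candidate of minimal Dodgson′ score. -/
theorem dodgson'_elects_condorcet_winner
    (m : ℕ) (hm : 1 ≤ m) {V : Type*} [Fintype V] [Nonempty V]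
    (σ : V → (Fin m ≃ Fin m)) (c : Fin m) (hc : IsCondorcetWinner σ c) :
    dodgson'Score σ c = 0 ∧
    (∀ d : Fin m, d ≠ c → 1 ≤ dodgson'Score σ d) ∧
    (∀ d : Fin m, (∀ e : Fin m, dodgson'Score σ d ≤ dodgson'Score σ e) → d = c) :=
  dodgson'_elects_condorcet_winner_general m σ c hc
end

section
/- Let V and C be finite types, ω : V → ℕ, f : V → C, and p ∈ C; for a vote function h, the score of candidate c under h is ∑_{v : h v = c} ω v, and p is a winner under h if every candidate's score is at most p's score. Suppose g : V → C is such that p is a winner under g. Define g' : V → C by g' v = p if g v ≠ f v and g' v = f v otherwise. Then p is a winner under g' and {v | g' v ≠ f v} ⊆ {v | g v ≠ f v}. -/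
/-- The weighted plurality score of candidate `c` under vote function `h`. -/
def wplScore {V C : Type*} [Fintype V] [DecidableEq C] (ω : V → ℕ) (h : V → C) (c : C) : ℕ :=
  ∑ v ∈ Finset.univ.filter fun v => h v = c, ω v

/- Redirecting the bribed voters to `p` keeps every vote `g` gave to `p` and takes votes only
away from the other candidates, so `p`'s score can only grow and every rival's only shrink. -/

theorem wplScore_le_wplScore_of_imp {V C : Type*} [Fintype V] [DecidableEq C] (ω : V → ℕ)
    {h₁ h₂ : V → C} {c₁ c₂ : C} (himp : ∀ v, h₁ v = c₁ → h₂ v = c₂) :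
    wplScore ω h₁ c₁ ≤ wplScore ω h₂ c₂ :=
  Finset.sum_le_sum_of_subset fun v hv => by
    simp only [Finset.mem_filter, Finset.mem_univ, true_and] at hv ⊢
    exact himp v hv

section Redirect

variable {V C : Type*} [DecidableEq C]

def redirectBribed (f g : V → C) (p : C) (v : V) : C :=
  if g v ≠ f v then p else f v

variable {f g : V → C} {p : C}

theorem redirectBribed_eq_of_eq {v : V} (hv : g v = p) : redirectBribed f g p v = p := by
  unfold redirectBribed
  split_ifs with hbribed
  · rfl
  · exact (not_not.mp hbribed).symm.trans hv

theorem eq_of_redirectBribed_eq {v : V} {c : C} (hc : c ≠ p) (hv : redirectBribed f g p v = c) :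
    g v = c := by
  unfold redirectBribed at hv
  split_ifs at hv with hbribed
  · exact absurd hv.symm hc
  · exact (not_not.mp hbribed).trans hv

theorem setOf_redirectBribed_ne_subset :
    {v | redirectBribed f g p v ≠ f v} ⊆ {v | g v ≠ f v} := by
  intro v hv hunbribed
  simp [redirectBribed, hunbribed] at hv

variable [Fintype V] (ω : V → ℕ)

theorem wplScore_le_wplScore_redirectBribed_self :
    wplScore ω g p ≤ wplScore ω (redirectBribed f g p) p :=
  wplScore_le_wplScore_of_imp ω fun _ => redirectBribed_eq_of_eq

theorem wplScore_redirectBribed_le_of_ne {c : C} (hc : c ≠ p) :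
    wplScore ω (redirectBribed f g p) c ≤ wplScore ω g c :=
  wplScore_le_wplScore_of_imp ω fun _ => eq_of_redirectBribed_eq hc

end Redirect

/-- In weighted plurality bribery it only makes sense to bribe voters to vote for `p`:
redirecting all bribed voters to `p` preserves `p`'s victory and does not enlarge the
set of bribed voters. -/
theorem plurality_bribe_to_p
    {V C : Type*} [Fintype V] [DecidableEq C]
    (ω : V → ℕ) (f : V → C) (p : C) (g : V → C)
    (hwin : ∀ c, wplScore ω g c ≤ wplScore ω g p)
    (g' : V → C) (hg' : ∀ v, g' v = if g v ≠ f v then p else f v) :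
    (∀ c, wplScore ω g' c ≤ wplScore ω g' p) ∧
      {v | g' v ≠ f v} ⊆ {v | g v ≠ f v} := by
  obtain rfl : g' = redirectBribed f g p := funext hg'
  refine ⟨fun c => ?_, setOf_redirectBribed_ne_subset⟩
  rcases eq_or_ne c p with rfl | hc
  · exact le_rfl
  · calc wplScore ω (redirectBribed f g p) c ≤ wplScore ω g c :=
          wplScore_redirectBribed_le_of_ne ω hc
      _ ≤ wplScore ω g p := hwin c
      _ ≤ wplScore ω (redirectBribed f g p) p := wplScore_le_wplScore_redirectBribed_self ω
end

section
/- Let n ≥ 1, let s : Fin n → ℕ satisfy ∑_i s i = 2·S, and consider the weighted approval election with two candidates p and c and voters V = Option (Fin n), where the voter none has weight S and approval set {p}, and each voter some i has weight s i and approval set {c}; for an approval assignment b : V → Finset {p,c}, the score of a candidate d is the total weight of voters v with d ∈ b v, and p is a winner under b if every candidate's score is at most p's score. Flipping an entry costs: 2·S+1 for either entry of the voter none, s i for the p-entry of voter some i, and 2·S+1 for the c-entry of voter some i; the cost of b is the sum, over all voters v and all candidates d in the symmetric difference of b v and the original approval set of v, of the corresponding flip price. Then there exists an approval assignment b of cost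 at most S under which p is a winner, if and only if there exists A ⊆ Fin n with ∑_{i ∈ A} s i = S. -/
/-- Original approval sets in the reduction from Partition to
approval-weighted-$bribery′: candidates are `Fin 2` (`p = 0`, `c = 1`); the voter
`none` approves `{p}` and each voter `some i` approves `{c}`. -/
def partApproval {n : ℕ} : Option (Fin n) → Finset (Fin 2)
  | none => {0}
  | some _ => {1}

/-- Voter weights: `none` has weight `S` and `some i` has weight `s i`. -/
def partWeight {n : ℕ} (S : ℕ) (s : Fin n → ℕ) : Option (Fin n) → ℕ
  | none => S
  | some i => s i

/-- Entry-flip prices: both entries of `none` cost `2·S+1`, the `p`-entry of `some i`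
costs `s i`, and the `c`-entry of `some i` costs `2·S+1`. -/
def partPrice {n : ℕ} (S : ℕ) (s : Fin n → ℕ) : Option (Fin n) → Fin 2 → ℕ
  | none, _ => 2 * S + 1
  | some i, d => if d = 0 then s i else 2 * S + 1

/-- Correctness of the reduction from Partition proving that
approval-weighted-$bribery′ is NP-complete: some entry-flipping bribery of total cost
at most `S` makes `p = 0` a winner iff some subset of the weights sums to `S`. -/
theorem partition_to_approval_weighted_dollar_bribery'
    (n S : ℕ) (hn : 1 ≤ n) (s : Fin n → ℕ) (hs : ∑ i, s i = 2 * S) :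
    (∃ b : Option (Fin n) → Finset (Fin 2),
        (∑ v : Option (Fin n),
            ∑ d ∈ (b v \ partApproval v) ∪ (partApproval v \ b v),
              partPrice S s v d) ≤ S ∧
        ∀ d : Fin 2,
          (∑ v ∈ Finset.univ.filter fun v => d ∈ b v, partWeight S s v) ≤
            ∑ v ∈ Finset.univ.filter fun v => (0 : Fin 2) ∈ b v, partWeight S s v) ↔
      ∃ A : Finset (Fin n), ∑ i ∈ A, s i = S := by
  constructor
  · rintro ⟨b, hcost, hwin⟩
    set f : Option (Fin n) → ℕ := fun v =>
      ∑ d ∈ (b v \ partApproval v) ∪ (partApproval v \ b v), partPrice S s v d with hf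
    have hterm : ∀ v, f v ≤ S := fun v =>
      le_trans (Finset.single_le_sum (f := f) (fun _ _ => Nat.zero_le _)
        (Finset.mem_univ v)) hcost
    have hd : ∀ v d, d ∈ (b v \ partApproval v) ∪ (partApproval v \ b v) →
        partPrice S s v d ≤ S := fun v d hdv =>
      le_trans (Finset.single_le_sum (fun _ _ => Nat.zero_le _) hdv) (hterm v)
    have h0none : (0 : Fin 2) ∈ b none := by
      by_contra h
      have := hd none 0 (by simp [partApproval, h])
      simp [partPrice] at this
      omega
    have h1none : (1 : Fin 2) ∉ b none := by
      intro h
      have := hd none 1 (by simp [partApproval, h])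
      simp [partPrice] at this
      omega
    have h1some : ∀ i, (1 : Fin 2) ∈ b (some i) := by
      intro i
      by_contra h
      have := hd (some i) 1 (by simp [partApproval, h])
      simp [partPrice] at this
      omega
    have hsymm : ∀ i, (b (some i) \ partApproval (some i)) ∪
        (partApproval (some i) \ b (some i))
        = if (0 : Fin 2) ∈ b (some i) then {0} else ∅ := by
      intro i
      ext d
      fin_cases d <;> by_cases h : (0 : Fin 2) ∈ b (some i) <;>
        simp [partApproval, h1some i, h]
    refine ⟨Finset.univ.filter (fun i => (0 : Fin 2) ∈ b (some i)), ?_⟩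
    -- cost of the bribery restricted to `some` voters
    have hsum : ∑ i : Fin n, f (some i)
        = ∑ i ∈ Finset.univ.filter (fun i => (0 : Fin 2) ∈ b (some i)), s i := by
      rw [Finset.sum_filter]
      refine Finset.sum_congr rfl fun i _ => ?_
      rw [hf]
      simp only [hsymm i]
      by_cases h : (0 : Fin 2) ∈ b (some i) <;> simp [h, partPrice]
    have hle : ∑ i ∈ Finset.univ.filter (fun i => (0 : Fin 2) ∈ b (some i)), s i ≤ S := by
      rw [← hsum]
      calc ∑ i : Fin n, f (some i) ≤ f none + ∑ i : Fin n, f (some i) := Nat.le_add_left _ _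
        _ = ∑ v : Option (Fin n), f v := (Fintype.sum_option f).symm
        _ ≤ S := hcost
    -- scores
    have hscore : ∀ d : Fin 2,
        (∑ v ∈ Finset.univ.filter fun v => d ∈ b v, partWeight S s v)
        = (if d ∈ b none then S else 0) + ∑ i : Fin n, (if d ∈ b (some i) then s i else 0) := by
      intro d
      rw [Finset.sum_filter, Fintype.sum_option]
      simp [partWeight]
    have hwin1 := hwin 1
    rw [hscore 1, hscore 0] at hwin1
    simp only [h1none, if_neg, h0none, if_pos, if_true] at hwin1
    have h2 : ∑ i : Fin n, (if (1 : Fin 2) ∈ b (some i) then s i else 0) = 2 * S := by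
      rw [← hs]
      exact Finset.sum_congr rfl fun i _ => by simp [h1some i]
    have h3 : ∑ i : Fin n, (if (0 : Fin 2) ∈ b (some i) then s i else 0)
        = ∑ i ∈ Finset.univ.filter (fun i => (0 : Fin 2) ∈ b (some i)), s i :=
      (Finset.sum_filter _ _).symm
    rw [h2, h3] at hwin1
    omega
  · rintro ⟨A, hA⟩
    refine ⟨fun v => match v with
      | none => {0}
      | some i => if i ∈ A then {0, 1} else {1}, ?_, ?_⟩
    · rw [Fintype.sum_option]
      have hnone : ∑ d ∈ (({0} : Finset (Fin 2)) \ partApproval (none : Option (Fin n))) ∪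
          (partApproval (none : Option (Fin n)) \ {0}), partPrice S s none d = 0 := by
        simp [partApproval]
      rw [hnone, Nat.zero_add]
      have hsome : ∀ i : Fin n,
          ∑ d ∈ (((if i ∈ A then {0, 1} else {1}) : Finset (Fin 2)) \ partApproval (some i)) ∪
            (partApproval (some i) \ (if i ∈ A then {0, 1} else {1})),
            partPrice S s (some i) d = if i ∈ A then s i else 0 := by
        intro i
        by_cases h : i ∈ A <;> simp [h, partApproval, partPrice]
      calc ∑ i : Fin n, _ = ∑ i : Fin n, (if i ∈ A then s i else 0) :=
            Finset.sum_congr rfl fun i _ => hsome i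
        _ = ∑ i ∈ A, s i := by rw [← Finset.sum_filter, Finset.filter_mem_eq_inter,
            Finset.univ_inter]
        _ ≤ S := hA.le
    · intro d
      have hsc : ∀ e : Fin 2,
          (∑ v ∈ Finset.univ.filter fun v => e ∈ (fun v => match v with
            | none => ({0} : Finset (Fin 2))
            | some i => if i ∈ A then {0, 1} else {1}) v, partWeight S s v)
          = (if e ∈ ({0} : Finset (Fin 2)) then S else 0) +
            ∑ i : Fin n, (if e ∈ ((if i ∈ A then {0, 1} else {1}) : Finset (Fin 2))
              then s i else 0) := by
        intro e
        rw [Finset.sum_filter, Fintype.sum_option]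
        simp [partWeight]
      rw [hsc d, hsc 0]
      have h0 : ∑ i : Fin n, (if (0 : Fin 2) ∈ ((if i ∈ A then {0, 1} else {1}) :
          Finset (Fin 2)) then s i else 0) = S := by
        rw [← hA]
        rw [← Finset.sum_filter]
        congr 1
        ext i
        by_cases h : i ∈ A <;> simp [h]
      fin_cases d
      · exact le_refl _
      · have h1 : ∑ i : Fin n, (if (1 : Fin 2) ∈ ((if i ∈ A then {0, 1} else {1}) :
            Finset (Fin 2)) then s i else 0) = 2 * S := by
          rw [← hs]
          refine Finset.sum_congr rfl fun i _ => ?_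
          by_cases h : i ∈ A <;> simp [h]
        simp only [h0, h1]
        simp
        omega
end
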